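/- arXiv:2604.00951 — 8 statements merged into one kernel-verified Lean document; each statement's English description precedes it below -/
import Mathlib

section
/- Let T ≥ 1 and τ ∈ (0, π/2) with 2^T·τ/π ∉ ℤ. For l ∈ {0, 1, …, 2^T − 1}, define the complex amplitudes a_l = 2^(−T) · Σ_{k=0}^{2^T−1} exp(i·2k·(τ − πl/2^T)) and b_l = 2^(−T) · Σ_{k=0}^{2^T−1} exp(−i·2k·(τ + πl/2^T)). Then (|a_l|² + |b_l|²)/2 = [sin²(2^T τ)/2^(2T+1)] · [ 1/sin²(τ − lπ/2^T) + 1/sin²(τ + lπ/2^T) ], which is the exact probability mass function of the quantum amplitude estimation outcome Y at value l. -/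
open Real

lemma norm_exp_two_sub_one (φ : ℝ) :
    ‖Complex.exp (2 * (φ : ℂ) * Complex.I) - 1‖ = 2 * |Real.sin φ| := by
  have hef : Complex.exp ((φ:ℂ) * Complex.I) * Complex.exp (-(φ:ℂ) * Complex.I) = 1 := by
    rw [← Complex.exp_add]; ring_nf; exact Complex.exp_zero
  have he2 : Complex.exp (2 * (φ:ℂ) * Complex.I)
      = Complex.exp ((φ:ℂ) * Complex.I) * Complex.exp ((φ:ℂ) * Complex.I) := by
    rw [← Complex.exp_add]; ring_nf
  have h : Complex.exp (2 * (φ:ℂ) * Complex.I) - 1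
      = Complex.exp ((φ:ℂ) * Complex.I) * (2 * Complex.I * Complex.sin (φ:ℂ)) := by
    rw [he2, Complex.sin]
    linear_combination hef - Complex.exp ((φ:ℂ) * Complex.I) *
      (Complex.exp (-(φ:ℂ) * Complex.I) - Complex.exp ((φ:ℂ) * Complex.I)) * Complex.I_sq
  rw [h, norm_mul, norm_mul, norm_mul]
  simp [Complex.norm_exp_ofReal_mul_I, ← Complex.ofReal_sin, Complex.norm_real]

lemma geom_norm (N : ℕ) (θ : ℝ) (hθ : Real.sin θ ≠ 0) :
    ‖∑ k ∈ Finset.range N, Complex.exp (Complex.I * (2 * (k : ℂ)) * (θ : ℂ))‖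
      = |Real.sin (N * θ)| / |Real.sin θ| := by
  set x := Complex.exp (2 * (θ:ℂ) * Complex.I) with hx
  have hterm : ∀ k : ℕ, Complex.exp (Complex.I * (2 * (k : ℂ)) * (θ : ℂ)) = x ^ k := by
    intro k
    rw [hx, ← Complex.exp_nat_mul]
    ring_nf
  have hx1 : x ≠ 1 := by
    intro h
    rw [hx, Complex.exp_eq_one_iff] at h
    obtain ⟨n, hn⟩ := h
    have hθπ : θ = (n:ℝ) * π := by
      have h2 : ((θ:ℝ):ℂ) = (((n:ℝ) * π : ℝ):ℂ) := by
        push_cast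
        have := mul_right_cancel₀ Complex.I_ne_zero
          (by rw [hn]; ring : (2:ℂ) * θ * Complex.I = ((n:ℂ) * (2*π)) * Complex.I)
        linear_combination this / 2
      exact_mod_cast h2
    exact hθ (hθπ ▸ Real.sin_int_mul_pi n)
  have hxN : x ^ N = Complex.exp (2 * (((N:ℝ) * θ : ℝ):ℂ) * Complex.I) := by
    rw [hx, ← Complex.exp_nat_mul]
    push_cast
    ring_nf
  simp only [hterm]
  rw [geom_sum_eq hx1, norm_div, hxN]
  rw [show x = Complex.exp (2 * ((θ:ℝ):ℂ) * Complex.I) from hx]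
  rw [norm_exp_two_sub_one, norm_exp_two_sub_one,
    mul_div_mul_left _ _ (two_ne_zero)]

/-- The exact probability mass function of the QAE outcome: with
amplitudes `a_l`, `b_l` as in canonical quantum amplitude estimation,
`(|a_l|² + |b_l|²)/2 = [sin²(2^T τ)/2^(2T+1)]·[csc²(τ − lπ/2^T) + csc²(τ + lπ/2^T)]`. -/
theorem qae_exact_pmf (T : ℕ) (hT : 1 ≤ T) (τ : ℝ) (hτ : τ ∈ Set.Ioo 0 (π / 2))
    (hgrid : ∀ m : ℤ, (2 : ℝ) ^ T * τ / π ≠ m) (l : ℕ) (hl : l < 2 ^ T) :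
    let a : ℂ := ((2 : ℂ) ^ T)⁻¹ * ∑ k ∈ Finset.range (2 ^ T),
      Complex.exp (Complex.I * (2 * (k : ℂ)) * ((τ : ℂ) - (π : ℂ) * (l : ℂ) / 2 ^ T))
    let b : ℂ := ((2 : ℂ) ^ T)⁻¹ * ∑ k ∈ Finset.range (2 ^ T),
      Complex.exp (-(Complex.I * (2 * (k : ℂ)) * ((τ : ℂ) + (π : ℂ) * (l : ℂ) / 2 ^ T)))
    (‖a‖ ^ 2 + ‖b‖ ^ 2) / 2
      = Real.sin ((2 : ℝ) ^ T * τ) ^ 2 / 2 ^ (2 * T + 1)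
        * (1 / Real.sin (τ - l * π / 2 ^ T) ^ 2 + 1 / Real.sin (τ + l * π / 2 ^ T) ^ 2) := by
  intro a b
  have h2T : (2:ℝ)^T ≠ 0 := by positivity
  set θ₁ : ℝ := τ - l * π / 2 ^ T with hθ₁
  set θ₂ : ℝ := τ + l * π / 2 ^ T with hθ₂
  have hsin1 : Real.sin θ₁ ≠ 0 := by
    intro h
    rw [Real.sin_eq_zero_iff] at h
    obtain ⟨n, hn⟩ := h
    apply hgrid ((l:ℤ) + n * 2 ^ T)
    rw [div_eq_iff Real.pi_ne_zero]
    push_cast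
    rw [hθ₁] at hn
    field_simp at hn
    linear_combination -hn
  have hsin2 : Real.sin θ₂ ≠ 0 := by
    intro h
    rw [Real.sin_eq_zero_iff] at h
    obtain ⟨n, hn⟩ := h
    apply hgrid (-(l:ℤ) + n * 2 ^ T)
    rw [div_eq_iff Real.pi_ne_zero]
    push_cast
    rw [hθ₂] at hn
    field_simp at hn
    linear_combination -hn
  -- norms
  have ha : ‖a‖ = ((2:ℝ)^T)⁻¹ * (|Real.sin ((2:ℝ)^T * τ)| / |Real.sin θ₁|) := by
    have harg : (τ : ℂ) - (π : ℂ) * (l : ℂ) / 2 ^ T = ((θ₁ : ℝ) : ℂ) := by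
      rw [hθ₁]; push_cast; ring
    have hNθ : ((2 ^ T : ℕ) : ℝ) * θ₁ = (2:ℝ)^T * τ + ((-(l:ℤ) : ℤ) : ℝ) * π := by
      rw [hθ₁]; push_cast; field_simp; ring
    rw [show a = ((2:ℂ)^T)⁻¹ * ∑ k ∈ Finset.range (2 ^ T),
        Complex.exp (Complex.I * (2 * (k : ℂ)) * ((θ₁ : ℝ) : ℂ)) by rw [← harg]]
    rw [norm_mul, geom_norm _ _ hsin1, hNθ, Real.sin_add_int_mul_pi]
    simp [abs_mul, abs_inv, abs_pow]
  have hb : ‖b‖ = ((2:ℝ)^T)⁻¹ * (|Real.sin ((2:ℝ)^T * τ)| / |Real.sin θ₂|) := by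
    have harg : ∀ k : ℕ, -(Complex.I * (2 * (k : ℂ)) * ((τ : ℂ) + (π : ℂ) * (l : ℂ) / 2 ^ T))
        = Complex.I * (2 * (k : ℂ)) * (((-θ₂ : ℝ)) : ℂ) := by
      intro k; rw [hθ₂]; push_cast; ring
    have hNθ : ((2 ^ T : ℕ) : ℝ) * (-θ₂) = -((2:ℝ)^T * τ) + ((-(l:ℤ) : ℤ) : ℝ) * π := by
      rw [hθ₂]; push_cast; field_simp; ring
    have hs : Real.sin (-θ₂) ≠ 0 := by rw [Real.sin_neg]; exact neg_ne_zero.mpr hsin2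
    rw [show b = ((2:ℂ)^T)⁻¹ * ∑ k ∈ Finset.range (2 ^ T),
        Complex.exp (Complex.I * (2 * (k : ℂ)) * (((-θ₂ : ℝ)) : ℂ)) by
      simp only [b, harg]]
    rw [norm_mul, geom_norm _ _ hs, hNθ, Real.sin_add_int_mul_pi, Real.sin_neg, Real.sin_neg]
    simp [abs_mul, abs_inv, abs_pow]
  rw [ha, hb, mul_pow, mul_pow, div_pow, div_pow, sq_abs, sq_abs, sq_abs]
  have hpow : (2:ℝ) ^ (2 * T + 1) = 2 * ((2:ℝ)^T)^2 := by
    rw [pow_succ, two_mul, pow_add]; ring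
  rw [hpow]
  have hA : Real.sin θ₁ ^ 2 ≠ 0 := pow_ne_zero _ hsin1
  have hB : Real.sin θ₂ ^ 2 ≠ 0 := pow_ne_zero _ hsin2
  field_simp
end

section
/- Let T ≥ 1 and τ ∈ (0, π/2) with 2^T·τ/π ∉ ℤ. Define P_τ(l) = [sin²(2^T τ)/2^(2T+1)] · [ 1/sin²(τ − lπ/2^T) + 1/sin²(τ + lπ/2^T) ] for l ∈ {0, 1, …, 2^T − 1}. Then Σ_{l=0}^{2^T−1} P_τ(l) = 1, i.e., P_τ is a probability mass function on {0,…,2^T−1}. -/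
open Real

private lemma sin_ne_zero_of_pow (T : ℕ) {u : ℝ} (h : Real.sin ((2 : ℝ) ^ T * u) ≠ 0) :
    Real.sin u ≠ 0 := by
  intro hu
  apply h
  rcases Real.sin_eq_zero_iff.mp hu with ⟨n, hn⟩
  exact Real.sin_eq_zero_iff.mpr ⟨2 ^ T * n, by push_cast; rw [← hn]; ring⟩

private lemma csc_sq_double {y : ℝ} (h : Real.sin (2 * y) ≠ 0) :
    1 / Real.sin y ^ 2 + 1 / Real.cos y ^ 2 = 4 / Real.sin (2 * y) ^ 2 := by
  have hs : Real.sin y ≠ 0 := fun h' => h (by rw [Real.sin_two_mul, h']; ring)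
  have hc : Real.cos y ≠ 0 := fun h' => h (by rw [Real.sin_two_mul, h']; ring)
  rw [Real.sin_two_mul]
  field_simp
  nlinarith [Real.sin_sq_add_cos_sq y]

private lemma sum_csc_sq (T : ℕ) : ∀ x : ℝ, Real.sin ((2 : ℝ) ^ T * x) ≠ 0 →
    ∑ l ∈ Finset.range (2 ^ T), 1 / Real.sin (x + l * π / 2 ^ T) ^ 2
      = 4 ^ T / Real.sin ((2 : ℝ) ^ T * x) ^ 2 := by
  induction T with
  | zero => intro x hx; simp
  | succ T ih =>
    intro x hx
    have hx2 : Real.sin ((2 : ℝ) ^ T * (2 * x)) ≠ 0 := by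
      rw [show (2 : ℝ) ^ T * (2 * x) = (2 : ℝ) ^ (T + 1) * x by ring]; exact hx
    have key : ∀ l ∈ Finset.range (2 ^ T),
        1 / Real.sin (x + l * π / 2 ^ (T + 1)) ^ 2
          + 1 / Real.sin (x + (↑(2 ^ T + l) : ℝ) * π / 2 ^ (T + 1)) ^ 2
        = 4 * (1 / Real.sin (2 * x + l * π / 2 ^ T) ^ 2) := by
      intro l _
      set y : ℝ := x + l * π / 2 ^ (T + 1) with hy
      have h2y : 2 * y = 2 * x + l * π / 2 ^ T := by
        rw [hy]; field_simp; ring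
      have hsin2y : Real.sin (2 * y) ≠ 0 := by
        apply sin_ne_zero_of_pow T
        have : (2 : ℝ) ^ T * (2 * y) = (2 : ℝ) ^ (T + 1) * x + l * π := by
          rw [h2y]; field_simp; ring
        rw [this, show ((l : ℝ)) = ((l : ℤ) : ℝ) by simp, Real.sin_add_int_mul_pi]
        simp only [ne_eq, mul_eq_zero, not_or]
        constructor
        · positivity
        · exact hx
      have h2 : x + (↑(2 ^ T + l) : ℝ) * π / 2 ^ (T + 1) = y + π / 2 := by
        rw [hy]; push_cast; field_simp; ring
      rw [h2, Real.sin_add_pi_div_two, csc_sq_double hsin2y, ← h2y]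
      ring
    calc ∑ l ∈ Finset.range (2 ^ (T + 1)), 1 / Real.sin (x + l * π / 2 ^ (T + 1)) ^ 2
        = ∑ l ∈ Finset.range (2 ^ T + 2 ^ T), 1 / Real.sin (x + l * π / 2 ^ (T + 1)) ^ 2 := by
          rw [show (2 : ℕ) ^ (T + 1) = 2 ^ T + 2 ^ T by ring]
      _ = ∑ l ∈ Finset.range (2 ^ T), (1 / Real.sin (x + l * π / 2 ^ (T + 1)) ^ 2
            + 1 / Real.sin (x + (↑(2 ^ T + l) : ℝ) * π / 2 ^ (T + 1)) ^ 2) := by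
          rw [Finset.sum_range_add, ← Finset.sum_add_distrib]
      _ = ∑ l ∈ Finset.range (2 ^ T), 4 * (1 / Real.sin (2 * x + l * π / 2 ^ T) ^ 2) :=
          Finset.sum_congr rfl key
      _ = 4 * (4 ^ T / Real.sin ((2 : ℝ) ^ T * (2 * x)) ^ 2) := by
          rw [← Finset.mul_sum, ih (2 * x) hx2]
      _ = 4 ^ (T + 1) / Real.sin ((2 : ℝ) ^ (T + 1) * x) ^ 2 := by
          rw [show (2 : ℝ) ^ T * (2 * x) = (2 : ℝ) ^ (T + 1) * x by ring]; ring

/-- The exact QAE outcome distribution with `T` precision qubits at phase `τ`. -/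
noncomputable def qaePMF (T : ℕ) (τ : ℝ) (l : ℕ) : ℝ :=
  Real.sin ((2 : ℝ) ^ T * τ) ^ 2 / 2 ^ (2 * T + 1)
    * (1 / Real.sin (τ - l * π / 2 ^ T) ^ 2 + 1 / Real.sin (τ + l * π / 2 ^ T) ^ 2)

/-- The QAE outcome probabilities sum to one: `P_τ` is a probability
mass function on `{0,…,2^T−1}`. -/
theorem qae_pmf_sums_to_one (T : ℕ) (hT : 1 ≤ T) (τ : ℝ) (hτ : τ ∈ Set.Ioo 0 (π / 2))
    (hgrid : ∀ m : ℤ, (2 : ℝ) ^ T * τ / π ≠ m) :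
    ∑ l ∈ Finset.range (2 ^ T), qaePMF T τ l = 1 := by
  have hs : Real.sin ((2 : ℝ) ^ T * τ) ≠ 0 := by
    intro h
    rcases Real.sin_eq_zero_iff.mp h with ⟨n, hn⟩
    exact hgrid n (by rw [← hn]; field_simp)
  have hsneg : Real.sin ((2 : ℝ) ^ T * (-τ)) ≠ 0 := by
    rw [show (2 : ℝ) ^ T * (-τ) = -((2 : ℝ) ^ T * τ) by ring, Real.sin_neg]
    simpa using hs
  have h1 : ∑ l ∈ Finset.range (2 ^ T), 1 / Real.sin (τ - (l : ℝ) * π / 2 ^ T) ^ 2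
      = 4 ^ T / Real.sin ((2 : ℝ) ^ T * τ) ^ 2 := by
    have := sum_csc_sq T (-τ) hsneg
    rw [show (4 : ℝ) ^ T / Real.sin ((2 : ℝ) ^ T * (-τ)) ^ 2
        = 4 ^ T / Real.sin ((2 : ℝ) ^ T * τ) ^ 2 by
      rw [show (2 : ℝ) ^ T * (-τ) = -((2 : ℝ) ^ T * τ) by ring, Real.sin_neg]; ring] at this
    rw [← this]
    apply Finset.sum_congr rfl
    intro l _
    rw [show τ - (l : ℝ) * π / 2 ^ T = -(-τ + l * π / 2 ^ T) by ring, Real.sin_neg]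
    ring
  have h2 : ∑ l ∈ Finset.range (2 ^ T), 1 / Real.sin (τ + (l : ℝ) * π / 2 ^ T) ^ 2
      = 4 ^ T / Real.sin ((2 : ℝ) ^ T * τ) ^ 2 := sum_csc_sq T τ hs
  simp only [qaePMF, ← Finset.mul_sum, Finset.sum_add_distrib, h1, h2]
  have h4 : (2 : ℝ) ^ (2 * T + 1) = 2 * 4 ^ T := by
    rw [pow_succ']; congr 1; rw [pow_mul]; norm_num
  field_simp [h4]
  ring_nf
  rw [mul_comm T 2, pow_mul]
  norm_num
end

section
/- Let T ≥ 1 and τ ∈ (0, π/2) with 2^T·τ/π ∉ ℤ, and let Y be a random variable on {0,…,2^T−1} with probability mass function P_τ(l) = [sin²(2^T τ)/2^(2T+1)] · [ 1/sin²(τ − lπ/2^T) + 1/sin²(τ + lπ/2^T) ]. Then the bias of the QAE estimator satisfies the exact identity E[sin²(π·Y/2^T)] − sin²τ = 2^(−2T) · sin²(2^T τ) · Σ_{l=0}^{2^T−1} sin(lπ/2^T + τ) / sin(lπ/2^T − τ). -/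
open Real

lemma sum_range_add' {M : Type*} [AddCommMonoid M] (f : ℕ → M) (a b : ℕ) :
    ∑ l ∈ Finset.range (a + b), f l
      = ∑ l ∈ Finset.range a, f l + ∑ l ∈ Finset.range b, f (a + l) := by
  rw [Finset.range_eq_Ico,
    ← Finset.sum_Ico_consecutive f (Nat.zero_le a) (Nat.le_add_right a b)]
  congr 1
  rw [Finset.sum_Ico_eq_sum_range]
  simp
  rw [Finset.sum_Ico_eq_sum_range]
  simp

lemma sin_sq_sub' (θ τ : ℝ) : sin θ ^ 2 - sin τ ^ 2 = sin (θ + τ) * sin (θ - τ) := by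
  have h1 := sin_sq_add_cos_sq θ
  have h2 := sin_sq_add_cos_sq τ
  rw [sin_add, sin_sub]
  nlinarith [h1, h2]

lemma pair_csc (y : ℝ) (hs : sin y ≠ 0) (hc : cos y ≠ 0) :
    1 / sin y ^ 2 + 1 / sin (y + π / 2) ^ 2 = 4 / sin (2 * y) ^ 2 := by
  rw [sin_add_pi_div_two, sin_two_mul]
  have h := sin_sq_add_cos_sq y
  field_simp
  nlinarith [h]

lemma sin_grid_ne (T : ℕ) (x : ℝ) (h : ∀ m : ℤ, (2 : ℝ) ^ T * x / π ≠ m) (k : ℤ) :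
    Real.sin (x + k * π / 2 ^ T) ≠ 0 := by
  intro h0
  obtain ⟨n, hn⟩ := Real.sin_eq_zero_iff.1 h0
  apply h ((2 : ℤ) ^ T * n - k)
  have hπ : (π : ℝ) ≠ 0 := Real.pi_ne_zero
  have h2 : ((2 : ℝ) ^ T) ≠ 0 := by positivity
  push_cast
  field_simp
  field_simp at hn
  linear_combination -hn

lemma csc2_sum (T : ℕ) (x : ℝ) (h : ∀ m : ℤ, (2 : ℝ) ^ T * x / π ≠ m) :
    ∑ l ∈ Finset.range (2 ^ T), 1 / Real.sin (x + l * π / 2 ^ T) ^ 2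
      = 4 ^ T / Real.sin ((2 : ℝ) ^ T * x) ^ 2 := by
  induction T generalizing x with
  | zero => simp
  | succ T ih =>
    have hsplit : (2 : ℕ) ^ (T + 1) = 2 ^ T + 2 ^ T := by rw [pow_succ]; ring
    rw [hsplit, sum_range_add']
    have h2 : ((2 : ℝ) ^ (T + 1)) ≠ 0 := by positivity
    have hpair : ∀ l ∈ Finset.range (2 ^ T),
        1 / Real.sin (x + l * π / 2 ^ (T + 1)) ^ 2
          + 1 / Real.sin (x + (((2:ℕ) ^ T + l : ℕ) : ℝ) * π / 2 ^ (T + 1)) ^ 2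
        = 4 * (1 / Real.sin (2 * x + l * π / 2 ^ T) ^ 2) := by
      intro l _
      have hy : Real.sin (x + l * π / 2 ^ (T + 1)) ≠ 0 := by
        have := sin_grid_ne (T + 1) x h l
        simpa using this
      have hc : Real.cos (x + l * π / 2 ^ (T + 1)) ≠ 0 := by
        have := sin_grid_ne (T + 1) x h ((2 : ℤ) ^ T + l)
        rw [show x + ((2:ℤ)^T + l : ℤ) * π / 2 ^ (T+1)
            = (x + l * π / 2 ^ (T+1)) + π / 2 by
          push_cast
          field_simp
          ring] at this
        rwa [Real.sin_add_pi_div_two] at this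
      have key := pair_csc (x + l * π / 2 ^ (T + 1)) hy hc
      rw [show 2 * (x + l * π / 2 ^ (T + 1)) = 2 * x + l * π / 2 ^ T by
          field_simp; ring] at key
      rw [show x + (((2:ℕ) ^ T + l : ℕ) : ℝ) * π / 2 ^ (T + 1)
          = (x + l * π / 2 ^ (T + 1)) + π / 2 by
        push_cast
        field_simp
        ring]
      rw [key]
      ring
    rw [← Finset.sum_add_distrib, Finset.sum_congr rfl hpair, ← Finset.mul_sum]
    have h' : ∀ m : ℤ, (2 : ℝ) ^ T * (2 * x) / π ≠ m := by
      intro m hm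
      apply h m
      rw [← hm]
      ring
    rw [ih (2 * x) h']
    rw [show (2 : ℝ) ^ T * (2 * x) = (2 : ℝ) ^ (T + 1) * x by ring]
    ring


/-- Exact bias identity for the QAE estimator `sin²(πY/2^T)` when
`Y` has the QAE outcome distribution `P_τ`:
`E[sin²(πY/2^T)] − sin²τ = 2^(−2T) sin²(2^T τ) Σ_l sin(lπ/2^T + τ)/sin(lπ/2^T − τ)`. -/
theorem qae_exact_bias (T : ℕ) (hT : 1 ≤ T) (τ : ℝ) (hτ : τ ∈ Set.Ioo 0 (π / 2))
    (hgrid : ∀ m : ℤ, (2 : ℝ) ^ T * τ / π ≠ m) :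
    (∑ l ∈ Finset.range (2 ^ T), qaePMF T τ l * Real.sin (π * l / 2 ^ T) ^ 2)
        - Real.sin τ ^ 2
      = ((2 : ℝ) ^ (2 * T))⁻¹ * Real.sin ((2 : ℝ) ^ T * τ) ^ 2
        * ∑ l ∈ Finset.range (2 ^ T),
            Real.sin (l * π / 2 ^ T + τ) / Real.sin (l * π / 2 ^ T - τ) := by
  obtain ⟨hτ0, hτ2⟩ := hτ
  have hπ0 : (0 : ℝ) < π := Real.pi_pos
  have h2T : ((2 : ℝ) ^ T) ≠ 0 := by positivity
  have hsinτ : Real.sin τ ≠ 0 :=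
    ne_of_gt (Real.sin_pos_of_pos_of_lt_pi hτ0 (by linarith))
  have hsinN : Real.sin ((2 : ℝ) ^ T * τ) ≠ 0 := by
    intro h0
    obtain ⟨n, hn⟩ := Real.sin_eq_zero_iff.1 h0
    exact hgrid n (by field_simp; linarith [hn])
  have ha : ∀ l : ℕ, Real.sin (τ - l * π / 2 ^ T) ≠ 0 := by
    intro l
    have := sin_grid_ne T τ hgrid (-(l : ℤ))
    push_cast at this
    rwa [show τ + -(l : ℝ) * π / 2 ^ T = τ - l * π / 2 ^ T by ring] at this
  have hb : ∀ l : ℕ, Real.sin (τ + l * π / 2 ^ T) ≠ 0 := by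
    intro l
    have := sin_grid_ne T τ hgrid (l : ℤ)
    push_cast at this
    exact this
  have hc : ∀ l : ℕ, Real.sin ((l : ℝ) * π / 2 ^ T - τ) ≠ 0 := by
    intro l
    rw [show (l : ℝ) * π / 2 ^ T - τ = -(τ - l * π / 2 ^ T) by ring, Real.sin_neg]
    exact neg_ne_zero.2 (ha l)
  have hd : ∀ l : ℕ, Real.sin ((l : ℝ) * π / 2 ^ T + τ) ≠ 0 := by
    intro l
    rw [show (l : ℝ) * π / 2 ^ T + τ = τ + l * π / 2 ^ T by ring]
    exact hb l
  -- normalization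
  have Splus : ∑ l ∈ Finset.range (2 ^ T), 1 / Real.sin (τ + l * π / 2 ^ T) ^ 2
      = 4 ^ T / Real.sin ((2 : ℝ) ^ T * τ) ^ 2 := csc2_sum T τ hgrid
  have hneg : ∀ m : ℤ, (2 : ℝ) ^ T * (-τ) / π ≠ m := by
    intro m hm
    apply hgrid (-m)
    push_cast
    linear_combination -hm
  have Sminus : ∑ l ∈ Finset.range (2 ^ T), 1 / Real.sin (τ - l * π / 2 ^ T) ^ 2
      = 4 ^ T / Real.sin ((2 : ℝ) ^ T * τ) ^ 2 := by
    have h1 := csc2_sum T (-τ) hneg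
    rw [show (2 : ℝ) ^ T * -τ = -((2 : ℝ) ^ T * τ) by ring, Real.sin_neg, neg_sq] at h1
    rw [← h1]
    refine Finset.sum_congr rfl fun l _ => ?_
    rw [show -τ + (l : ℝ) * π / 2 ^ T = -(τ - l * π / 2 ^ T) by ring, Real.sin_neg, neg_sq]
  have hnorm : ∑ l ∈ Finset.range (2 ^ T), qaePMF T τ l = 1 := by
    unfold qaePMF
    rw [← Finset.mul_sum, Finset.sum_add_distrib, Splus, Sminus,
      show (4 : ℝ) ^ T = 2 ^ (2 * T) by
        rw [show (4 : ℝ) = 2 ^ 2 by norm_num, ← pow_mul]]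
    field_simp
    ring
  -- pointwise identity
  have hpoint : ∀ l ∈ Finset.range (2 ^ T),
      qaePMF T τ l * Real.sin (π * l / 2 ^ T) ^ 2
        = qaePMF T τ l * Real.sin τ ^ 2
          + Real.sin ((2 : ℝ) ^ T * τ) ^ 2 / 2 ^ (2 * T + 1)
            * (Real.sin (l * π / 2 ^ T + τ) / Real.sin (l * π / 2 ^ T - τ)
              + Real.sin (l * π / 2 ^ T - τ) / Real.sin (l * π / 2 ^ T + τ)) := by
    intro l _
    have e1 : Real.sin ((l : ℝ) * π / 2 ^ T + τ) = Real.sin (τ + l * π / 2 ^ T) := by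
      rw [add_comm]
    have e2 : Real.sin ((l : ℝ) * π / 2 ^ T - τ) = -Real.sin (τ - l * π / 2 ^ T) := by
      rw [show (l : ℝ) * π / 2 ^ T - τ = -(τ - l * π / 2 ^ T) by ring, Real.sin_neg]
    have hs : Real.sin (π * l / 2 ^ T) ^ 2
        = Real.sin τ ^ 2 - Real.sin (τ + l * π / 2 ^ T) * Real.sin (τ - l * π / 2 ^ T) := by
      have h3 := sin_sq_sub' ((l : ℝ) * π / 2 ^ T) τ
      rw [e1, e2, show π * (l : ℝ) / 2 ^ T = (l : ℝ) * π / 2 ^ T by ring] at *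
      linarith [h3]
    unfold qaePMF
    rw [hs, e1, e2, div_neg, neg_div]
    set a := Real.sin (τ - l * π / 2 ^ T) with hadef
    set b := Real.sin (τ + l * π / 2 ^ T) with hbdef
    have h1 : a ≠ 0 := ha l
    have h2 : b ≠ 0 := hb l
    field_simp
    ring
  -- symmetry of the linear sum
  have hsym : ∑ l ∈ Finset.range (2 ^ T),
        Real.sin (l * π / 2 ^ T - τ) / Real.sin (l * π / 2 ^ T + τ)
      = ∑ l ∈ Finset.range (2 ^ T),
        Real.sin (l * π / 2 ^ T + τ) / Real.sin (l * π / 2 ^ T - τ) := by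
    have hN : 0 < 2 ^ T := Nat.pow_pos (n := T) (by norm_num)
    refine Finset.sum_nbij' (fun l => (2 ^ T - l) % 2 ^ T) (fun l => (2 ^ T - l) % 2 ^ T)
      (fun a ha => Finset.mem_range.2 (Nat.mod_lt _ hN))
      (fun a ha => Finset.mem_range.2 (Nat.mod_lt _ hN)) ?_ ?_ ?_
    · intro a ha
      have h1 := Finset.mem_range.1 ha
      rcases Nat.eq_zero_or_pos a with rfl | h0
      · simp
      · have hmod : (2 ^ T - a) % 2 ^ T = 2 ^ T - a := Nat.mod_eq_of_lt (by omega)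
        rw [hmod, Nat.sub_sub_self h1.le, Nat.mod_eq_of_lt h1]
    · intro a ha
      have h1 := Finset.mem_range.1 ha
      rcases Nat.eq_zero_or_pos a with rfl | h0
      · simp
      · have hmod : (2 ^ T - a) % 2 ^ T = 2 ^ T - a := Nat.mod_eq_of_lt (by omega)
        rw [hmod, Nat.sub_sub_self h1.le, Nat.mod_eq_of_lt h1]
    · intro l hl
      have hlN := Finset.mem_range.1 hl
      rcases Nat.eq_zero_or_pos l with rfl | hl0
      · simp only [Nat.sub_zero, Nat.mod_self, Nat.cast_zero, zero_mul, zero_div,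
          zero_add, zero_sub, Real.sin_neg]
        rw [div_eq_div_iff hsinτ (neg_ne_zero.2 hsinτ)]
        ring
      · have hmod : (2 ^ T - l) % 2 ^ T = 2 ^ T - l := Nat.mod_eq_of_lt (by omega)
        rw [hmod]
        have e : ((2 ^ T - l : ℕ) : ℝ) * π / 2 ^ T = π - l * π / 2 ^ T := by
          have : ((2 ^ T - l : ℕ) : ℝ) = 2 ^ T - l := by
            push_cast [Nat.cast_sub hlN.le]
            ring
          rw [this]
          field_simp
        rw [e, show π - (l : ℝ) * π / 2 ^ T + τ = π - ((l : ℝ) * π / 2 ^ T - τ) by ring,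
          show π - (l : ℝ) * π / 2 ^ T - τ = π - ((l : ℝ) * π / 2 ^ T + τ) by ring,
          Real.sin_pi_sub, Real.sin_pi_sub]
  -- assembly
  rw [Finset.sum_congr rfl hpoint, Finset.sum_add_distrib, ← Finset.sum_mul,
    ← Finset.mul_sum, Finset.sum_add_distrib, hsym, hnorm]
  ring
end

section
/- Let T ≥ 1 and τ ∈ (0, π/2) with 2^T·τ/π ∉ ℤ, and let Y be a random variable on {0,…,2^T−1} with probability mass function P_τ(l) = [sin²(2^T τ)/2^(2T+1)] · [ 1/sin²(τ − lπ/2^T) + 1/sin²(τ + lπ/2^T) ]. Then the mean squared error of the QAE estimator satisfies the exact identity E[(sin²(π·Y/2^T) − sin²τ)²] = 2^(−2T) · sin²(2^T τ) · Σ_{l=0}^{2^T−1} sin²(lπ/2^T + τ). -/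
open Real

private lemma sin_sq_sub_sin_sq' (a b : ℝ) :
    Real.sin a ^ 2 - Real.sin b ^ 2 = Real.sin (a - b) * Real.sin (a + b) := by
  rw [Real.sin_sub, Real.sin_add]
  linear_combination (Real.sin b)^2 * (Real.sin_sq_add_cos_sq a)
    - (Real.sin a)^2 * (Real.sin_sq_add_cos_sq b)

private lemma sum_sin_sq_reflect (N : ℕ) (hN : 1 ≤ N) (τ : ℝ) :
    ∑ l ∈ Finset.range N, Real.sin (τ - (l:ℝ) * π / (N:ℝ)) ^ 2
      = ∑ l ∈ Finset.range N, Real.sin ((l:ℝ) * π / (N:ℝ) + τ) ^ 2 := by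
  have hNR : (0:ℝ) < (N:ℝ) := by exact_mod_cast hN
  set f : ℕ → ℝ := fun l => Real.sin ((l:ℝ) * π / (N:ℝ) + τ) ^ 2 with hf
  set g : ℕ → ℝ := fun l => Real.sin (τ - (l:ℝ) * π / (N:ℝ)) ^ 2 with hg
  have hend : g N = g 0 := by
    simp only [hg]
    have h1 : τ - ((N:ℕ):ℝ) * π / (N:ℝ) = τ - π := by field_simp
    have h2 : τ - ((0:ℕ):ℝ) * π / (N:ℝ) = τ := by push_cast; ring
    rw [h1, h2]
    have : Real.sin (τ - π) = - Real.sin τ := by rw [Real.sin_sub]; simp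
    rw [this]; ring
  have hshift : ∑ l ∈ Finset.range N, g (l + 1) = ∑ l ∈ Finset.range N, g l := by
    have hA := Finset.sum_range_succ' g N
    have hB := Finset.sum_range_succ g N
    rw [hB, hend] at hA
    linarith
  have hrefl := Finset.sum_range_reflect f N
  have key : ∀ j ∈ Finset.range N, f (N - 1 - j) = g (j + 1) := by
    intro j hj
    rw [Finset.mem_range] at hj
    have hc : ((N - 1 - j : ℕ) : ℝ) = (N:ℝ) - 1 - j := by
      have h' : N - 1 - j = N - (1 + j) := by omega
      rw [h', Nat.cast_sub (by omega)]
      push_cast; ring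
    simp only [hf, hg, hc]
    have harg : ((N:ℝ) - 1 - j) * π / (N:ℝ) + τ = π - (((j:ℝ) + 1) * π / (N:ℝ) - τ) := by
      field_simp; ring
    rw [harg, Real.sin_pi_sub]
    have h2 : τ - ((j:ℕ)+1:ℕ) * π / (N:ℝ) = -(((j:ℝ) + 1) * π / (N:ℝ) - τ) := by
      push_cast; ring
    rw [h2, Real.sin_neg]
    ring
  calc ∑ l ∈ Finset.range N, g l = ∑ l ∈ Finset.range N, g (l + 1) := hshift.symm
    _ = ∑ l ∈ Finset.range N, f (N - 1 - l) := (Finset.sum_congr rfl key).symm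
    _ = ∑ l ∈ Finset.range N, f l := hrefl

/-- Exact mean-squared-error identity for the QAE estimator
`sin²(πY/2^T)` when `Y` has the QAE outcome distribution `P_τ`:
`E[(sin²(πY/2^T) − sin²τ)²] = 2^(−2T) sin²(2^T τ) Σ_l sin²(lπ/2^T + τ)`. -/
theorem qae_exact_mse (T : ℕ) (hT : 1 ≤ T) (τ : ℝ) (hτ : τ ∈ Set.Ioo 0 (π / 2))
    (hgrid : ∀ m : ℤ, (2 : ℝ) ^ T * τ / π ≠ m) :
    (∑ l ∈ Finset.range (2 ^ T),
        qaePMF T τ l * (Real.sin (π * l / 2 ^ T) ^ 2 - Real.sin τ ^ 2) ^ 2)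
      = ((2 : ℝ) ^ (2 * T))⁻¹ * Real.sin ((2 : ℝ) ^ T * τ) ^ 2
        * ∑ l ∈ Finset.range (2 ^ T), Real.sin (l * π / 2 ^ T + τ) ^ 2 := by
  have hπ : (0:ℝ) < π := Real.pi_pos
  have hN : (0:ℝ) < (2:ℝ)^T := by positivity
  have hplus : ∀ l : ℕ, Real.sin (τ + l * π / 2 ^ T) ≠ 0 := by
    intro l h
    obtain ⟨n, hn⟩ := Real.sin_eq_zero_iff.mp h
    refine hgrid (n * 2 ^ T - l) ?_
    push_cast
    field_simp at hn ⊢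
    linarith [hn]
  have hminus : ∀ l : ℕ, Real.sin (τ - l * π / 2 ^ T) ≠ 0 := by
    intro l h
    obtain ⟨n, hn⟩ := Real.sin_eq_zero_iff.mp h
    refine hgrid (n * 2 ^ T + l) ?_
    push_cast
    field_simp at hn ⊢
    linarith [hn]
  have term : ∀ l ∈ Finset.range (2 ^ T),
      qaePMF T τ l * (Real.sin (π * l / 2 ^ T) ^ 2 - Real.sin τ ^ 2) ^ 2
        = Real.sin ((2:ℝ)^T * τ)^2 / 2^(2*T+1)
            * (Real.sin (τ + l * π / 2 ^ T) ^ 2 + Real.sin (τ - l * π / 2 ^ T) ^ 2) := by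
    intro l _
    have e1 : Real.sin (π * l / 2 ^ T) ^ 2 - Real.sin τ ^ 2
        = -(Real.sin (τ - l * π / 2 ^ T) * Real.sin (τ + l * π / 2 ^ T)) := by
      have h2 := sin_sq_sub_sin_sq' (π * l / 2 ^ T) τ
      have hx : π * l / 2 ^ T - τ = -(τ - l * π / 2 ^ T) := by ring
      have hy : π * l / 2 ^ T + τ = τ + l * π / 2 ^ T := by ring
      rw [hx, hy, Real.sin_neg] at h2
      linarith [h2]
    rw [e1]
    unfold qaePMF
    have h1 := hplus l; have h2 := hminus l
    set s := Real.sin (τ - l * π / 2 ^ T) with hs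
    set t := Real.sin (τ + l * π / 2 ^ T) with ht
    field_simp
  rw [Finset.sum_congr rfl term, ← Finset.mul_sum, Finset.sum_add_distrib]
  have hsum1 : ∑ l ∈ Finset.range (2 ^ T), Real.sin (τ + (l:ℝ) * π / 2 ^ T) ^ 2
      = ∑ l ∈ Finset.range (2 ^ T), Real.sin ((l:ℝ) * π / 2 ^ T + τ) ^ 2 := by
    exact Finset.sum_congr rfl fun l _ => by rw [add_comm]
  have hsum2 : ∑ l ∈ Finset.range (2 ^ T), Real.sin (τ - (l:ℝ) * π / 2 ^ T) ^ 2
      = ∑ l ∈ Finset.range (2 ^ T), Real.sin ((l:ℝ) * π / 2 ^ T + τ) ^ 2 := by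
    have h := sum_sin_sq_reflect (2 ^ T) (Nat.one_le_two_pow) τ
    push_cast at h
    exact h
  rw [hsum1, hsum2]
  set S := ∑ l ∈ Finset.range (2 ^ T), Real.sin ((l:ℝ) * π / 2 ^ T + τ) ^ 2 with hS
  rw [pow_succ]
  field_simp
  ring
end

section
/- There exists a constant C > 0 such that for every natural number T ≥ 1 and every τ ∈ (0, π/2) with 2^T·τ/π ∉ ℤ, the bias of the QAE estimator satisfies | 2^(−2T) · sin²(2^T τ) · Σ_{l=0}^{2^T−1} sin(lπ/2^T + τ)/sin(lπ/2^T − τ) | ≤ C · 2^(−T); i.e., the bias is O(2^(−T)) uniformly in τ. -/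
open Real

/-- Off-grid: all shifted sines are nonzero. -/
lemma qae_sin_ne_zero (T : ℕ) (θ : ℝ) (h : ∀ m : ℤ, (2 : ℝ) ^ T * θ / π ≠ m) :
    ∀ l : ℤ, Real.sin (θ + l * π / 2 ^ T) ≠ 0 := by
  intro l hs
  rw [Real.sin_eq_zero_iff] at hs
  obtain ⟨n, hn⟩ := hs
  apply h ((2 : ℤ) ^ T * n - l)
  have hπ : (π : ℝ) ≠ 0 := Real.pi_ne_zero
  have h2 : ((2 : ℝ) ^ T) ≠ 0 := by positivity
  push_cast
  field_simp
  field_simp at hn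
  linarith [hn]

lemma cot_pair (a : ℝ) (h1 : Real.sin a ≠ 0) (h2 : Real.cos a ≠ 0) :
    Real.cot a + Real.cot (a + π / 2) = 2 * Real.cot (2 * a) := by
  rw [Real.cot_eq_cos_div_sin, Real.cot_eq_cos_div_sin, Real.cot_eq_cos_div_sin,
    Real.cos_add_pi_div_two, Real.sin_add_pi_div_two, Real.sin_two_mul, Real.cos_two_mul']
  field_simp
  ring

/-- Cotangent sum identity for powers of two. -/
lemma cot_sum (T : ℕ) : ∀ θ : ℝ, (∀ m : ℤ, (2 : ℝ) ^ T * θ / π ≠ m) →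
    ∑ l ∈ Finset.range (2 ^ T), Real.cot (θ + l * π / 2 ^ T)
      = 2 ^ T * Real.cot (2 ^ T * θ) := by
  induction T with
  | zero =>
    intro θ h
    simp
  | succ T ih =>
    intro θ h
    have hne := qae_sin_ne_zero (T + 1) θ h
    have h2T : ((2 : ℝ) ^ T) ≠ 0 := by positivity
    have key : ∀ l : ℕ, l < 2 ^ T →
        Real.cot (θ + l * π / 2 ^ (T + 1)) + Real.cot (θ + ((2 ^ T + l : ℕ) : ℝ) * π / 2 ^ (T + 1))
          = 2 * Real.cot (2 * θ + l * π / 2 ^ T) := by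
      intro l hl
      have e1 : θ + ((2 ^ T + l : ℕ) : ℝ) * π / 2 ^ (T + 1)
          = (θ + l * π / 2 ^ (T + 1)) + π / 2 := by
        push_cast
        rw [pow_succ]
        field_simp
        ring
      have e2 : 2 * (θ + (l : ℝ) * π / 2 ^ (T + 1)) = 2 * θ + l * π / 2 ^ T := by
        rw [pow_succ]; field_simp
      have hs : Real.sin (θ + (l : ℝ) * π / 2 ^ (T + 1)) ≠ 0 := by
        have := hne (l : ℤ); push_cast at this ⊢; exact this
      have hc : Real.cos (θ + (l : ℝ) * π / 2 ^ (T + 1)) ≠ 0 := by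
        have := hne ((2 ^ T + l : ℕ) : ℤ)
        push_cast at this
        rw [show θ + ((2:ℝ) ^ T + l) * π / 2 ^ (T + 1)
            = (θ + l * π / 2 ^ (T + 1)) + π / 2 by
          rw [pow_succ]; field_simp; ring, Real.sin_add_pi_div_two] at this
        exact this
      rw [e1]
      push_cast
      rw [cot_pair _ hs hc, e2]
    have hsplit : (2 : ℕ) ^ (T + 1) = 2 ^ T + 2 ^ T := by ring
    rw [hsplit, Finset.sum_range_add]
    have : ∀ x ∈ Finset.range (2 ^ T),
        Real.cot (θ + x * π / 2 ^ (T + 1)) + Real.cot (θ + ((2 ^ T + x : ℕ) : ℝ) * π / 2 ^ (T + 1))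
          = 2 * Real.cot (2 * θ + x * π / 2 ^ T) := by
      intro x hx
      exact key x (Finset.mem_range.mp hx)
    have hsum : ∑ l ∈ Finset.range (2 ^ T),
        (Real.cot (θ + l * π / 2 ^ (T + 1)) + Real.cot (θ + ((2 ^ T + l : ℕ) : ℝ) * π / 2 ^ (T + 1)))
          = ∑ l ∈ Finset.range (2 ^ T), 2 * Real.cot (2 * θ + l * π / 2 ^ T) :=
      Finset.sum_congr rfl this
    have h2θ : ∀ m : ℤ, (2 : ℝ) ^ T * (2 * θ) / π ≠ m := by
      intro m hm
      apply h m
      rw [← hm]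
      rw [pow_succ]; ring
    have hih := ih (2 * θ) h2θ
    have hcast : ∀ l : ℕ, θ + ((2 ^ T + l : ℕ) : ℝ) * π / 2 ^ (T + 1)
        = θ + ((2 : ℝ) ^ T + l) * π / 2 ^ (T + 1) := by intro l; push_cast; ring_nf
    calc ∑ l ∈ Finset.range (2 ^ T), Real.cot (θ + l * π / 2 ^ (T + 1))
          + ∑ l ∈ Finset.range (2 ^ T), Real.cot (θ + ((2 ^ T + l : ℕ) : ℝ) * π / 2 ^ (T + 1))
        = ∑ l ∈ Finset.range (2 ^ T), 2 * Real.cot (2 * θ + l * π / 2 ^ T) := by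
          rw [← hsum, Finset.sum_add_distrib]
      _ = 2 * (2 ^ T * Real.cot (2 ^ T * (2 * θ))) := by
          rw [← Finset.mul_sum, hih]
      _ = 2 ^ (T + 1) * Real.cot (2 ^ (T + 1) * θ) := by
          rw [pow_succ]; ring_nf

/-- The bias of the QAE estimator is `O(2^(−T))` uniformly in `τ`:
there is a constant `C > 0` such that for all `T ≥ 1` and all off-grid `τ ∈ (0, π/2)`,
`|2^(−2T) sin²(2^T τ) Σ_l sin(lπ/2^T + τ)/sin(lπ/2^T − τ)| ≤ C · 2^(−T)`. -/
theorem qae_bias_uniform_bound :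
    ∃ C : ℝ, 0 < C ∧ ∀ T : ℕ, 1 ≤ T → ∀ τ : ℝ, τ ∈ Set.Ioo 0 (π / 2) →
      (∀ m : ℤ, (2 : ℝ) ^ T * τ / π ≠ m) →
      |((2 : ℝ) ^ (2 * T))⁻¹ * Real.sin ((2 : ℝ) ^ T * τ) ^ 2
          * ∑ l ∈ Finset.range (2 ^ T),
              Real.sin (l * π / 2 ^ T + τ) / Real.sin (l * π / 2 ^ T - τ)|
        ≤ C * ((2 : ℝ) ^ T)⁻¹ := by
  refine ⟨1, one_pos, ?_⟩
  intro T hT τ hτ hoff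
  set N : ℝ := (2 : ℝ) ^ T with hN
  have hN0 : (0 : ℝ) < N := by positivity
  -- hypothesis for θ = -τ
  have hoff' : ∀ m : ℤ, (2 : ℝ) ^ T * (-τ) / π ≠ m := by
    intro m hm
    exact hoff (-m) (by push_cast; linear_combination -hm)
  have hne := qae_sin_ne_zero T (-τ) hoff'
  -- each term rewrites via cot
  have hterm : ∀ l : ℕ,
      Real.sin (l * π / 2 ^ T + τ) / Real.sin (l * π / 2 ^ T - τ)
        = Real.cos (2 * τ) + Real.sin (2 * τ) * Real.cot (-τ + l * π / 2 ^ T) := by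
    intro l
    have hs : Real.sin (-τ + l * π / 2 ^ T) ≠ 0 := by
      have := hne (l : ℤ); push_cast at this; exact this
    have e : (l : ℝ) * π / 2 ^ T + τ = (-τ + l * π / 2 ^ T) + 2 * τ := by ring
    have e2 : (l : ℝ) * π / 2 ^ T - τ = -τ + l * π / 2 ^ T := by ring
    rw [e, e2, Real.sin_add, Real.cot_eq_cos_div_sin]
    generalize hy : -τ + (l : ℝ) * π / 2 ^ T = y at hs ⊢
    field_simp
  have hsum : ∑ l ∈ Finset.range (2 ^ T),
      Real.sin (l * π / 2 ^ T + τ) / Real.sin (l * π / 2 ^ T - τ)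
        = N * Real.cos (2 * τ) + Real.sin (2 * τ) * (N * Real.cot (N * (-τ))) := by
    rw [Finset.sum_congr rfl (fun l _ => hterm l)]
    rw [Finset.sum_add_distrib, ← Finset.mul_sum, cot_sum T (-τ) hoff']
    simp [hN, Finset.sum_const, Finset.card_range]
  have hsNτ : Real.sin (N * τ) ≠ 0 := by
    intro hc
    rw [Real.sin_eq_zero_iff] at hc
    obtain ⟨k, hk⟩ := hc
    apply hoff k
    rw [div_eq_iff Real.pi_ne_zero]
    linarith [hk]
  have hcot : Real.cot (N * (-τ)) = - (Real.cos (N * τ) / Real.sin (N * τ)) := by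
    rw [show N * (-τ) = -(N * τ) by ring, Real.cot_eq_cos_div_sin, Real.cos_neg, Real.sin_neg, div_neg]
  -- closed form for the whole expression
  have hkey : ((2 : ℝ) ^ (2 * T))⁻¹ * Real.sin ((2 : ℝ) ^ T * τ) ^ 2
          * ∑ l ∈ Finset.range (2 ^ T),
              Real.sin (l * π / 2 ^ T + τ) / Real.sin (l * π / 2 ^ T - τ)
        = N⁻¹ * (Real.sin (N * τ) * Real.sin (N * τ - 2 * τ)) := by
    rw [hsum, hcot]
    have h2T : (2 : ℝ) ^ (2 * T) = N * N := by rw [hN, ← pow_add]; ring_nf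
    rw [h2T]
    have expand : Real.sin (N * τ - 2 * τ)
        = Real.sin (N * τ) * Real.cos (2 * τ) - Real.cos (N * τ) * Real.sin (2 * τ) :=
      Real.sin_sub (N * τ) (2 * τ)
    rw [expand]
    field_simp
    ring
  rw [hkey]
  rw [abs_mul]
  have h1 : |N⁻¹| = N⁻¹ := abs_of_pos (by positivity)
  rw [h1, one_mul]
  have h2 : |Real.sin (N * τ) * Real.sin (N * τ - 2 * τ)| ≤ 1 := by
    rw [abs_mul]
    have a1 := Real.abs_sin_le_one (N * τ)
    have a2 := Real.abs_sin_le_one (N * τ - 2 * τ)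
    nlinarith [abs_nonneg (Real.sin (N * τ)), abs_nonneg (Real.sin (N * τ - 2 * τ))]
  calc N⁻¹ * |Real.sin (N * τ) * Real.sin (N * τ - 2 * τ)| ≤ N⁻¹ * 1 := by
        apply mul_le_mul_of_nonneg_left h2 (by positivity)
    _ = N⁻¹ := mul_one _
end

section
/- Let T ≥ 1 and τ ∈ (0, π/2) with 2^T·τ/π ∉ ℤ, and write l* = ⌊2^T·τ/π⌋ and φ = 2^T·τ/π − l* ∈ (0,1). Then, for Y distributed according to the QAE outcome distribution P_τ on {0,…,2^T−1}, P_τ(l*) + P_τ(l*+1) ≥ [sin²(φπ)/(2π²)] · [ 1/φ² + 1/(1−φ)² ]. -/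
open Real

lemma heqaux (s u c : ℝ) (hc : c ≠ 0) (hp : π ≠ 0) (hu : u ≠ 0) :
    s / (2 * c ^ 2) * (1 / (u * π / c) ^ 2) = s / (2 * π ^ 2) * (1 / u ^ 2) := by
  field_simp

/-- With `l* = ⌊2^T τ/π⌋` and `φ = 2^T τ/π − l* ∈ (0,1)`, the two
nearest grid outcomes carry probability
`P_τ(l*) + P_τ(l*+1) ≥ [sin²(φπ)/(2π²)]·[1/φ² + 1/(1−φ)²]`. -/
theorem qae_nearest_pair_lower_bound (T : ℕ) (hT : 1 ≤ T) (τ : ℝ)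
    (hτ : τ ∈ Set.Ioo 0 (π / 2)) (hgrid : ∀ m : ℤ, (2 : ℝ) ^ T * τ / π ≠ m) :
    let x : ℝ := (2 : ℝ) ^ T * τ / π
    let lstar : ℕ := ⌊x⌋₊
    let φ : ℝ := x - lstar
    qaePMF T τ lstar + qaePMF T τ (lstar + 1)
      ≥ Real.sin (φ * π) ^ 2 / (2 * π ^ 2) * (1 / φ ^ 2 + 1 / (1 - φ) ^ 2) := by
  intro x lstar φ
  have hπ : (0:ℝ) < π := Real.pi_pos
  have hc : (0:ℝ) < 2 ^ T := by positivity
  have hτ0 : 0 < τ := hτ.1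
  have hx0 : 0 < x := by positivity
  have hx0' : 0 ≤ x := hx0.le
  have hfl : (lstar : ℝ) ≤ x := Nat.floor_le hx0'
  have hfl2 : x < lstar + 1 := Nat.lt_floor_add_one x
  have hφ1 : φ < 1 := by simp only [φ]; linarith
  have hφ0 : 0 < φ := by
    rcases lt_or_eq_of_le hfl with h | h
    · simp only [φ]; linarith
    · exact absurd h.symm (hgrid lstar)
  -- τ in terms of x
  have hτx : τ = x * π / 2 ^ T := by
    field_simp [x]
    simp only [x]; rw [div_mul_cancel₀ _ hπ.ne', mul_comm]
  -- the two relevant angles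
  have ha : τ - lstar * π / 2 ^ T = φ * π / 2 ^ T := by
    rw [hτx]; simp only [φ]; ring
  have hb : τ - (lstar + 1 : ℕ) * π / 2 ^ T = -((1 - φ) * π / 2 ^ T) := by
    rw [hτx]; push_cast; simp only [φ]; ring
  -- sin squared equality
  have hsq : Real.sin ((2:ℝ) ^ T * τ) ^ 2 = Real.sin (φ * π) ^ 2 := by
    have h1 : (2:ℝ) ^ T * τ = φ * π + lstar * π := by
      rw [hτx]; simp only [φ]; field_simp; ring
    rw [h1, Real.sin_add_nat_mul_pi, mul_pow, ← pow_mul, mul_comm lstar 2, pow_mul]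
    norm_num
  -- bound for small positive angle y: sin y > 0 and sin y ≤ y, for y ∈ (0, π/2]
  have key : ∀ y : ℝ, 0 < y → y < π → 1 / y ^ 2 ≤ 1 / Real.sin y ^ 2 := by
    intro y hy0 hyπ
    have hs0 : 0 < Real.sin y := Real.sin_pos_of_pos_of_lt_pi hy0 hyπ
    have hs1 : Real.sin y ≤ y := Real.sin_le hy0.le
    have : Real.sin y ^ 2 ≤ y ^ 2 := by nlinarith
    apply one_div_le_one_div_of_le (by positivity) this
  have hT2 : (2:ℝ) ≤ 2 ^ T := by
    calc (2:ℝ) = 2 ^ 1 := by norm_num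
    _ ≤ 2 ^ T := by apply pow_le_pow_right₀ (by norm_num) hT
  have hapos : 0 < φ * π / 2 ^ T := by positivity
  have haπ : φ * π / 2 ^ T < π := by
    rw [div_lt_iff₀ hc]
    nlinarith
  have hbpos : 0 < (1 - φ) * π / 2 ^ T := by
    have : 0 < 1 - φ := by linarith
    positivity
  have hbπ : (1 - φ) * π / 2 ^ T < π := by
    rw [div_lt_iff₀ hc]
    nlinarith
  have ka := key _ hapos haπ
  have kb := key _ hbpos hbπ
  -- nonnegativity of dropped terms
  have hd1 : (0:ℝ) ≤ 1 / Real.sin (τ + lstar * π / 2 ^ T) ^ 2 := by positivity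
  have hd2 : (0:ℝ) ≤ 1 / Real.sin (τ + ((lstar : ℝ) + 1) * π / 2 ^ T) ^ 2 := by positivity
  have hsnn : (0:ℝ) ≤ Real.sin (φ * π) ^ 2 / 2 ^ (2 * T + 1) := by positivity
  have e1 : qaePMF T τ lstar ≥ Real.sin (φ * π) ^ 2 / 2 ^ (2 * T + 1) * (1 / (φ * π / 2 ^ T) ^ 2) := by
    unfold qaePMF
    rw [hsq, ha]
    exact mul_le_mul_of_nonneg_left (le_trans ka (le_add_of_nonneg_right hd1)) hsnn
  have e2 : qaePMF T τ (lstar + 1) ≥ Real.sin (φ * π) ^ 2 / 2 ^ (2 * T + 1) * (1 / ((1 - φ) * π / 2 ^ T) ^ 2) := by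
    unfold qaePMF
    rw [hsq]
    push_cast
    rw [show τ - (↑lstar + 1) * π / 2 ^ T = -((1 - φ) * π / 2 ^ T) by rw [hτx]; simp only [φ]; ring]
    rw [Real.sin_neg, neg_sq]
    exact mul_le_mul_of_nonneg_left (le_trans kb (le_add_of_nonneg_right hd2)) hsnn
  have heq1 : Real.sin (φ * π) ^ 2 / 2 ^ (2 * T + 1) * (1 / (φ * π / 2 ^ T) ^ 2)
      = Real.sin (φ * π) ^ 2 / (2 * π ^ 2) * (1 / φ ^ 2) := by
    have h2T : (2:ℝ) ^ (2 * T + 1) = 2 * ((2:ℝ) ^ T) ^ 2 := by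
      rw [two_mul, pow_succ, pow_add]; ring
    rw [h2T]
    exact heqaux _ _ _ (ne_of_gt hc) (ne_of_gt hπ) (ne_of_gt hφ0)
  have heq2 : Real.sin (φ * π) ^ 2 / 2 ^ (2 * T + 1) * (1 / ((1 - φ) * π / 2 ^ T) ^ 2)
      = Real.sin (φ * π) ^ 2 / (2 * π ^ 2) * (1 / (1 - φ) ^ 2) := by
    have h2T : (2:ℝ) ^ (2 * T + 1) = 2 * ((2:ℝ) ^ T) ^ 2 := by
      rw [two_mul, pow_succ, pow_add]; ring
    have h1φ : (1:ℝ) - φ ≠ 0 := by linarith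
    rw [h2T]
    exact heqaux _ _ _ (ne_of_gt hc) (ne_of_gt hπ) h1φ
  rw [heq1] at e1
  rw [heq2] at e2
  linarith [e1, e2, mul_add (Real.sin (φ * π) ^ 2 / (2 * π ^ 2)) (1 / φ ^ 2) (1 / (1 - φ) ^ 2)]
end

section
/- For every real φ ∈ (0, 1), the function h(φ) = [sin²(φπ)/π²] · [ 1/φ² + 1/(1−φ)² ] satisfies h(φ) ≥ 8/π², with equality only at φ = 1/2. -/
open Real

private lemma poly_aux (u P : ℝ) (hu : 0 < u) (hu' : u ≤ 1/16) (hP0 : 0 ≤ P)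
    (hP : P ≤ 9.9225) : 8*(1/4 - u)^2 < (1 - P*u/2)^2 * (1/2 + 2*u) := by
  nlinarith [mul_pos hu hu, mul_nonneg (mul_nonneg hP0 hP0) (mul_nonneg (mul_nonneg hu.le hu.le) hu.le),
    mul_nonneg (mul_nonneg hP0 hu.le) (sub_nonneg.2 hu'),
    mul_nonneg (mul_nonneg (mul_nonneg hP0 hP0) hu.le) (sub_nonneg.2 hu'),
    mul_pos hu (mul_pos hu hu), sq_nonneg (P*u)]

private lemma strict_lt (φ : ℝ) (h0 : 0 < φ) (h2 : φ < 1/2) :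
    8 < Real.sin (φ * π) ^ 2 * (1 / φ ^ 2 + 1 / (1 - φ) ^ 2) := by
  have h1 : φ < 1 := by linarith
  have hφ2 : (0:ℝ) < φ^2 := by positivity
  have h1φ : (0:ℝ) < 1 - φ := by linarith
  have h1φ2 : (0:ℝ) < (1-φ)^2 := by positivity
  have hsin0 : 0 ≤ Real.sin (φ * π) :=
    Real.sin_nonneg_of_nonneg_of_le_pi (by positivity) (by nlinarith [Real.pi_pos])
  rcases lt_or_ge φ (1/4) with hc | hc
  · -- chord bound on (0, 1/4): sin(φπ) ≥ 2√2 φ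
    have hchord : 2 * Real.sqrt 2 * φ ≤ Real.sin (φ * π) := by
      have hcc := strictConcaveOn_sin_Icc.concaveOn.2 (x := 0) (y := π/4)
        ⟨le_rfl, Real.pi_pos.le⟩ ⟨by positivity, by linarith [Real.pi_pos]⟩
        (show (0:ℝ) ≤ 1 - 4*φ by linarith) (show (0:ℝ) ≤ 4*φ by linarith)
        (show (1 - 4*φ) + 4*φ = 1 by ring)
      simp only [smul_eq_mul, Real.sin_zero, mul_zero, zero_add, Real.sin_pi_div_four] at hcc
      calc 2 * Real.sqrt 2 * φ = 4*φ * (Real.sqrt 2 / 2) := by ring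
        _ ≤ Real.sin ((1-4*φ)*0 + 4*φ*(π/4)) := by simpa using hcc
        _ = Real.sin (φ * π) := by ring_nf
    have hsq2 : (0:ℝ) < Real.sqrt 2 := by positivity
    have hs2 : (Real.sqrt 2)^2 = 2 := Real.sq_sqrt (by norm_num)
    have hss : 8 * φ^2 ≤ Real.sin (φ * π)^2 := by
      nlinarith [mul_pos (mul_pos (by norm_num : (0:ℝ) < 2) hsq2) h0]
    have hspos : 0 < Real.sin (φ * π) := lt_of_lt_of_le (by positivity) hchord
    have h8 : 8 ≤ Real.sin (φ * π)^2 / φ^2 := by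
      rw [le_div_iff₀ hφ2]; linarith
    have : Real.sin (φ * π) ^ 2 * (1 / φ ^ 2 + 1 / (1 - φ) ^ 2)
        = Real.sin (φ * π)^2 / φ^2 + Real.sin (φ * π)^2 / (1-φ)^2 := by ring
    rw [this]
    have : 0 < Real.sin (φ * π)^2 / (1-φ)^2 := by positivity
    linarith
  · -- quadratic cos bound on [1/4, 1/2)
    have hq : 1 - (π/2 - φ*π)^2/2 ≤ Real.sin (φ * π) := by
      have := Real.one_sub_sq_div_two_le_cos (x := π/2 - φ*π)
      rwa [Real.cos_pi_div_two_sub] at this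
    have hπl : π ≤ 3.15 := by linarith [Real.pi_lt_d2]
    have hπ0 : 0 < π := Real.pi_pos
    set u : ℝ := (1/2 - φ)^2 with hudef
    have hu : 0 < u := by rw [hudef]; exact pow_pos (by linarith) 2
    have hu' : u ≤ 1/16 := by nlinarith
    have hP : π^2 ≤ 9.9225 := by nlinarith
    have hqe : 1 - (π/2 - φ*π)^2/2 = 1 - π^2*u/2 := by rw [hudef]; ring
    have hqnn : 0 ≤ 1 - π^2*u/2 := by nlinarith
    have key : 8*(1/4 - u)^2 < (1 - π^2*u/2)^2 * (1/2 + 2*u) :=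
      poly_aux u (π^2) hu hu' (by positivity) hP
    have hsq : (1 - π^2*u/2)^2 ≤ Real.sin (φ * π)^2 := by
      rw [hqe] at hq; nlinarith
    have key2 : 8 * (φ^2 * (1-φ)^2) < Real.sin (φ * π)^2 * ((1-φ)^2 + φ^2) := by
      have e1 : φ^2 * (1-φ)^2 = (1/4 - u)^2 := by rw [hudef]; ring
      have e2 : (1-φ)^2 + φ^2 = 1/2 + 2*u := by rw [hudef]; ring
      rw [e1, e2]
      calc 8*(1/4-u)^2 < (1 - π^2*u/2)^2 * (1/2 + 2*u) := key
        _ ≤ Real.sin (φ * π)^2 * (1/2 + 2*u) := by nlinarith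
    have hB : (0:ℝ) < φ^2 * (1-φ)^2 := by positivity
    have e3 : (1:ℝ) / φ ^ 2 + 1 / (1 - φ) ^ 2 = ((1-φ)^2 + φ^2) / (φ^2 * (1-φ)^2) := by
      field_simp
    rw [e3, ← mul_div_assoc, lt_div_iff₀ hB]
    exact key2

private lemma sym (φ : ℝ) :
    Real.sin ((1-φ) * π) ^ 2 * (1 / (1-φ) ^ 2 + 1 / (1 - (1-φ)) ^ 2)
      = Real.sin (φ * π) ^ 2 * (1 / φ ^ 2 + 1 / (1 - φ) ^ 2) := by
  have : (1-φ) * π = π - φ * π := by ring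
  rw [this, Real.sin_pi_sub]
  ring_nf

/-- For `φ ∈ (0,1)`, `h(φ) = [sin²(φπ)/π²]·[1/φ² + 1/(1−φ)²]`
satisfies `h(φ) ≥ 8/π²`, with equality only at `φ = 1/2`. -/
theorem qae_success_lower_bound_fn (φ : ℝ) (hφ : φ ∈ Set.Ioo (0 : ℝ) 1) :
    8 / π ^ 2 ≤ Real.sin (φ * π) ^ 2 / π ^ 2 * (1 / φ ^ 2 + 1 / (1 - φ) ^ 2) ∧
      (Real.sin (φ * π) ^ 2 / π ^ 2 * (1 / φ ^ 2 + 1 / (1 - φ) ^ 2) = 8 / π ^ 2 →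
        φ = 1 / 2) := by
  obtain ⟨h0, h1⟩ := hφ
  have hπ2 : (0:ℝ) < π ^ 2 := by positivity
  have hE : 8 ≤ Real.sin (φ * π) ^ 2 * (1 / φ ^ 2 + 1 / (1 - φ) ^ 2) ∧
      (Real.sin (φ * π) ^ 2 * (1 / φ ^ 2 + 1 / (1 - φ) ^ 2) = 8 → φ = 1/2) := by
    rcases lt_trichotomy φ (1/2) with hc | hc | hc
    · have := strict_lt φ h0 hc
      exact ⟨this.le, fun h => absurd h (by linarith)⟩
    · subst hc
      constructor
      · rw [show (1:ℝ)/2 * π = π/2 by ring, Real.sin_pi_div_two]; norm_num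
      · intro _; rfl
    · have h0' : 0 < 1 - φ := by linarith
      have hc' : 1 - φ < 1/2 := by linarith
      have := strict_lt (1-φ) h0' hc'
      rw [sym] at this
      exact ⟨this.le, fun h => absurd h (by linarith)⟩
  constructor
  · rw [div_mul_eq_mul_div, div_le_div_iff₀ hπ2 hπ2]
    nlinarith [hE.1]
  · intro h
    apply hE.2
    rw [div_mul_eq_mul_div, div_eq_div_iff (ne_of_gt hπ2) (ne_of_gt hπ2)] at h
    have hπ2' : (π:ℝ)^2 ≠ 0 := ne_of_gt hπ2
    exact mul_right_cancel₀ hπ2' h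
end

section
/- Let T ≥ 1 and τ ∈ (0, π/2) with 2^T·τ/π ∉ ℤ, and let Y be a random variable on {0,…,2^T−1} distributed according to the QAE outcome distribution P_τ. Then the single-run success probability satisfies Pr( |sin²(π·Y/2^T) − sin²τ| ≤ π/2^T ) ≥ 8/π² > 1/2. -/
open Real

set_option maxHeartbeats 1000000 in
private lemma key_r1 {δ : ℝ} (h0 : 0 < δ) (hr : δ ≤ 1/5) :
    8 * δ^2 * (1-δ)^2 ≤ Real.sin (π*δ)^2 * ((1-δ)^2 + δ^2) := by
  have hpi1 : (3.141592 : ℝ) < π := pi_gt_d6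
  have hpi2 : π < 3.141593 := pi_lt_d6
  have hp2 : π^2 < 9.869607 := by nlinarith
  · -- region 1 : sin(πδ) ≥ 2.8284272 δ
    have ht1 : |π * δ| ≤ 1 := by
      rw [abs_of_nonneg (by positivity)]; nlinarith
    have hs := neg_le_of_abs_le (Real.sin_bound ht1)
    rw [abs_of_nonneg (by positivity : (0:ℝ) ≤ π * δ)] at hs
    have hs' : π * δ - (π*δ)^3/6 - (π*δ)^4 * (5/96) ≤ Real.sin (π*δ) := by
      have hx4 : 0 ≤ (π*δ)^4 := by positivity
      have hx1 : π*δ ≤ 1 := (le_abs_self _).trans ht1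
      have e5 : (π*δ)^5 = (π*δ)^4*(π*δ) := by ring
      linarith [mul_le_mul_of_nonneg_left hx1 hx4]
    have hp3 : π^3 < 31.009 := by nlinarith
    have hp4 : π^4 < 97.41 := by nlinarith
    have hd2 : δ^2 ≤ 1/25 := by nlinarith
    have hd3 : δ^3 ≤ δ * (1/25) := by nlinarith [mul_le_mul_of_nonneg_left hd2 h0.le]
    have hd3' : δ^3 ≤ 1/125 := by nlinarith [mul_le_mul_of_nonneg_left hd2 h0.le]
    have hd4 : δ^4 ≤ δ * (1/125) := by nlinarith [mul_le_mul_of_nonneg_left hd3' h0.le]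
    have h3a : π^3 * δ^3 ≤ 31.009 * (δ * (1/25)) :=
      mul_le_mul hp3.le hd3 (by positivity) (by norm_num)
    have h4a : π^4 * δ^4 ≤ 97.41 * (δ * (1/125)) :=
      mul_le_mul hp4.le hd4 (by positivity) (by norm_num)
    have hsd : (2.8284272:ℝ) * δ ≤ Real.sin (π*δ) := by
      have : (2.8284272:ℝ) * δ ≤ π * δ - (π*δ)^3/6 - (π*δ)^4 * (5/96) := by
        have e3 : (π*δ)^3 = π^3 * δ^3 := by ring
        have e4 : (π*δ)^4 = π^4 * δ^4 := by ring
        rw [e3, e4]; nlinarith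
      linarith
    have hsq : ((2.8284272:ℝ) * δ)^2 ≤ Real.sin (π*δ)^2 :=
      pow_le_pow_left₀ (by positivity) hsd 2
    have hmono := mul_le_mul_of_nonneg_right hsq
      (show (0:ℝ) ≤ (1-δ)^2 + δ^2 by positivity)
    have cert : ((2.8284272:ℝ)*δ)^2 * ((1-δ)^2 + δ^2) - 8*δ^2*(1-δ)^2
        = (42569984/100000000000000) * (δ^2*(1-δ)^2) + (800000042569984/100000000000000) * (δ^2*δ^2) := by
      ring
    linarith [hmono, cert, mul_nonneg (sq_nonneg δ) (sq_nonneg δ),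
      mul_nonneg (sq_nonneg δ) (sq_nonneg (1-δ))]

set_option maxHeartbeats 1000000 in
private lemma key_r2 {δ : ℝ} (hr : 1/5 < δ) (hr2 : δ ≤ 1/3) :
    8 * δ^2 * (1-δ)^2 ≤ Real.sin (π*δ)^2 * ((1-δ)^2 + δ^2) := by
  have hpi1 : (3.141592 : ℝ) < π := pi_gt_d6
  have hpi2 : π < 3.141593 := pi_lt_d6
  · -- region 2 : chord between π/6 and π/3
    have hconc := strictConcaveOn_sin_Icc.concaveOn
    have hmem1 : π/6 ∈ Set.Icc (0:ℝ) π :=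
      Set.mem_Icc.mpr ⟨by positivity, by linarith [pi_pos]⟩
    have hmem2 : π/3 ∈ Set.Icc (0:ℝ) π :=
      Set.mem_Icc.mpr ⟨by positivity, by linarith [pi_pos]⟩
    have ht0 : (0:ℝ) ≤ 2 - 6*δ := by linarith
    have hs0 : (0:ℝ) ≤ 6*δ - 1 := by linarith
    have hts : (2 - 6*δ) + (6*δ - 1) = 1 := by ring
    have hchord := hconc.2 hmem1 hmem2 ht0 hs0 hts
    have harg : (2 - 6*δ) • (π/6) + (6*δ - 1) • (π/3) = π * δ := by
      simp only [smul_eq_mul]; ring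
    rw [harg] at hchord
    simp only [smul_eq_mul, Real.sin_pi_div_six, Real.sin_pi_div_three] at hchord
    have hr3sq : Real.sqrt 3 ^ 2 = 3 := Real.sq_sqrt (by norm_num)
    have hr3lb : (1.732:ℝ) ≤ Real.sqrt 3 := by
      nlinarith [Real.sqrt_nonneg 3, hr3sq]
    have hlb' : 1 - 3*δ + (6*δ - 1) * 0.866 ≤ Real.sin (π * δ) := by
      have hmul := mul_le_mul_of_nonneg_left hr3lb hs0
      linarith [hchord, hmul]
    have hlb0 : (0:ℝ) ≤ 1 - 3*δ + (6*δ - 1) * 0.866 := by linarith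
    have hsq : (1 - 3*δ + (6*δ - 1) * 0.866)^2 ≤ Real.sin (π * δ)^2 :=
      pow_le_pow_left₀ hlb0 hlb' 2
    have hq : (0:ℝ) ≤ (δ-27/100)^2 * (33874287/312500000 + 13156927/1562500*δ + 51401/31250*δ^2) := by
      positivity
    have hl : (0:ℝ) ≤ 29141016941/3125000000000 + (-21084517/7812500000) * (δ-27/100) := by
      linarith
    have cert : (1 - 3*δ + (6*δ - 1) * 0.866)^2 * ((1-δ)^2 + δ^2) - 8 * δ^2 * (1-δ)^2
        = (δ-27/100)^2 * (33874287/312500000 + 13156927/1562500*δ + 51401/31250*δ^2)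
          + (29141016941/3125000000000 + (-21084517/7812500000) * (δ-27/100)) := by
      ring
    have hmono := mul_le_mul_of_nonneg_right hsq (show (0:ℝ) ≤ (1-δ)^2 + δ^2 by positivity)
    linarith [hq, hl, cert, hmono]

set_option maxHeartbeats 1000000 in
private lemma key_r3 {δ : ℝ} (hr2 : 1/3 < δ) (h1 : δ ≤ 1/2) :
    8 * δ^2 * (1-δ)^2 ≤ Real.sin (π*δ)^2 * ((1-δ)^2 + δ^2) := by
  have hpi1 : (3.141592 : ℝ) < π := pi_gt_d6
  have hpi2 : π < 3.141593 := pi_lt_d6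
  have hp2 : π^2 < 9.869607 := by nlinarith
  · -- region 3 : sin(πδ)² ≥ 1 - π²(1/2-δ)²
    have hid : Real.sin (π*δ)^2 = 1 - Real.sin (π/2 - π*δ)^2 := by
      rw [show Real.sin (π*δ) = Real.cos (π/2 - π*δ) from (Real.cos_pi_div_two_sub _).symm]
      have := Real.sin_sq_add_cos_sq (π/2 - π*δ)
      linarith
    have hsge : 1 - (π * (1/2 - δ))^2 ≤ Real.sin (π*δ)^2 := by
      rw [hid, show π/2 - π*δ = π * (1/2 - δ) by ring]
      have := Real.sin_sq_le_sq (x := π * (1/2 - δ))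
      linarith
    have hu2 : (1/2 - δ)^2 ≤ (1/2 - δ) * (1/6) := by nlinarith
    have hu2' : (1/2 - δ)^2 ≤ 1/36 := by nlinarith
    have h4 : (2*π^2+8) * ((1/2-δ)^2 * (1/2-δ)^2) ≤ (2*π^2+8) * ((1/2-δ)^2 * (1/36)) := by
      have : (1/2-δ)^2 * (1/2-δ)^2 ≤ (1/2-δ)^2 * (1/36) :=
        mul_le_mul_of_nonneg_left hu2' (sq_nonneg _)
      exact mul_le_mul_of_nonneg_left this (by positivity)
    have h5 : (0:ℝ) ≤ (208 - 20*π^2) * (1/2-δ)^2 :=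
      mul_nonneg (by nlinarith) (sq_nonneg _)
    have hmono := mul_le_mul_of_nonneg_right hsge
      (show (0:ℝ) ≤ (1-δ)^2 + δ^2 by positivity)
    have cert : (1 - (π*(1/2-δ))^2) * ((1-δ)^2 + δ^2) - 8*δ^2*(1-δ)^2
        = ((2*π^2+8)*((1/2-δ)^2*(1/36)) - (2*π^2+8)*((1/2-δ)^2*(1/2-δ)^2))
          + (208 - 20*π^2)*(1/2-δ)^2/36 := by ring
    linarith [hmono, cert, h4, h5]

private lemma key_half {δ : ℝ} (h0 : 0 < δ) (h1 : δ ≤ 1/2) :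
    8 * δ^2 * (1-δ)^2 ≤ Real.sin (π*δ)^2 * ((1-δ)^2 + δ^2) := by
  rcases le_or_gt δ (1/5) with hr | hr
  · exact key_r1 h0 hr
  rcases le_or_gt δ (1/3) with hr2 | hr2
  · exact key_r2 hr hr2
  · exact key_r3 hr2 h1

lemma key_ineq {δ : ℝ} (h0 : 0 < δ) (h1 : δ < 1) :
    8 * δ^2 * (1-δ)^2 ≤ Real.sin (π*δ)^2 * ((1-δ)^2 + δ^2) := by
  rcases le_or_gt δ (1/2) with h | h
  · exact key_half h0 h
  · have h' := key_half (δ := 1 - δ) (by linarith) (by linarith)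
    have hs : Real.sin (π * (1-δ)) = Real.sin (π * δ) := by
      rw [show π * (1-δ) = π - π * δ by ring, Real.sin_pi_sub]
    rw [hs] at h'
    nlinarith [h']

private lemma recip_sin_sq {θ : ℝ} (h0 : 0 < θ) (h1 : θ < π) :
    1/θ^2 ≤ 1/Real.sin θ^2 := by
  have hs0 : 0 < Real.sin θ := Real.sin_pos_of_pos_of_lt_pi h0 h1
  have hs : Real.sin θ ≤ θ := Real.sin_le h0.le
  have h2 : Real.sin θ^2 ≤ θ^2 := by nlinarith
  exact one_div_le_one_div_of_le (by positivity) h2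

private lemma sin_sq_diff_le (a b : ℝ) : |Real.sin a^2 - Real.sin b^2| ≤ |a - b| := by
  have h1 := Real.sin_sq_add_cos_sq a
  have h2 := Real.sin_sq_add_cos_sq b
  have hid : Real.sin a^2 - Real.sin b^2 = Real.sin (a+b) * Real.sin (a-b) := by
    rw [Real.sin_add, Real.sin_sub]
    nlinarith [h1, h2]
  rw [hid, abs_mul]
  calc |Real.sin (a+b)| * |Real.sin (a-b)| ≤ 1 * |a-b| :=
        mul_le_mul (Real.abs_sin_le_one _) Real.abs_sin_le_abs (abs_nonneg _) zero_le_one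
    _ = |a-b| := one_mul _

private lemma sin_sq_add_int_mul_pi (y : ℝ) (m : ℤ) :
    Real.sin (y + m*π)^2 = Real.sin y^2 := by
  rw [Real.sin_add_int_mul_pi, mul_pow]
  have h : ((-1:ℝ)^m)^2 = 1 := by
    rw [sq, ← zpow_add₀ (by norm_num : (-1:ℝ) ≠ 0)]
    exact Even.neg_one_zpow ⟨m, rfl⟩
  rw [h, one_mul]

private lemma qaePMF_nonneg (T : ℕ) (τ : ℝ) (l : ℕ) : 0 ≤ qaePMF T τ l := by
  unfold qaePMF; positivity

/-- lower bound using only the first (`-`) term -/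
private lemma qae_lb1 (T : ℕ) (τ : ℝ) (l : ℕ) (K θ : ℝ)
    (hKk : Real.sin ((2:ℝ)^T * τ)^2 / 2^(2*T+1) = K) (hK : 0 ≤ K)
    (hθ0 : 0 < θ) (hθπ : θ < π)
    (h1 : Real.sin (τ - (l:ℝ)*π/2^T)^2 = Real.sin θ^2) :
    K * (1/θ^2) ≤ qaePMF T τ l := by
  unfold qaePMF
  rw [hKk, h1]
  have hr := recip_sin_sq hθ0 hθπ
  have hpos : (0:ℝ) ≤ 1/Real.sin (τ + (l:ℝ)*π/2^T)^2 := by positivity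
  have : 1/θ^2 ≤ 1/Real.sin θ^2 + 1/Real.sin (τ + (l:ℝ)*π/2^T)^2 := by linarith
  exact mul_le_mul_of_nonneg_left this hK

/-- lower bound using only the second (`+`) term -/
private lemma qae_lb1' (T : ℕ) (τ : ℝ) (l : ℕ) (K θ : ℝ)
    (hKk : Real.sin ((2:ℝ)^T * τ)^2 / 2^(2*T+1) = K) (hK : 0 ≤ K)
    (hθ0 : 0 < θ) (hθπ : θ < π)
    (h2 : Real.sin (τ + (l:ℝ)*π/2^T)^2 = Real.sin θ^2) :
    K * (1/θ^2) ≤ qaePMF T τ l := by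
  unfold qaePMF
  rw [hKk, h2]
  have hr := recip_sin_sq hθ0 hθπ
  have hpos : (0:ℝ) ≤ 1/Real.sin (τ - (l:ℝ)*π/2^T)^2 := by positivity
  have : 1/θ^2 ≤ 1/Real.sin (τ - (l:ℝ)*π/2^T)^2 + 1/Real.sin θ^2 := by linarith
  exact mul_le_mul_of_nonneg_left this hK

/-- lower bound using both terms -/
private lemma qae_lb2 (T : ℕ) (τ : ℝ) (l : ℕ) (K θ : ℝ)
    (hKk : Real.sin ((2:ℝ)^T * τ)^2 / 2^(2*T+1) = K) (hK : 0 ≤ K)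
    (hθ0 : 0 < θ) (hθπ : θ < π)
    (h1 : Real.sin (τ - (l:ℝ)*π/2^T)^2 = Real.sin θ^2)
    (h2 : Real.sin (τ + (l:ℝ)*π/2^T)^2 = Real.sin θ^2) :
    K * (2/θ^2) ≤ qaePMF T τ l := by
  unfold qaePMF
  rw [hKk, h1, h2]
  have hr := recip_sin_sq hθ0 hθπ
  have : 2/θ^2 ≤ 1/Real.sin θ^2 + 1/Real.sin θ^2 := by
    have : (2:ℝ)/θ^2 = 1/θ^2 + 1/θ^2 := by ring
    linarith
  exact mul_le_mul_of_nonneg_left this hK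

set_option maxHeartbeats 2000000 in
/-- Single-run success probability of QAE:
`Pr(|sin²(πY/2^T) − sin²τ| ≤ π/2^T) ≥ 8/π² > 1/2`. -/
theorem qae_single_run_success (T : ℕ) (hT : 1 ≤ T) (τ : ℝ)
    (hτ : τ ∈ Set.Ioo 0 (π / 2)) (hgrid : ∀ m : ℤ, (2 : ℝ) ^ T * τ / π ≠ m) :
    8 / π ^ 2 ≤
      (∑ l ∈ Finset.range (2 ^ T),
        if |Real.sin (π * l / 2 ^ T) ^ 2 - Real.sin τ ^ 2| ≤ π / 2 ^ T
        then qaePMF T τ l else 0) ∧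
    (1 : ℝ) / 2 < 8 / π ^ 2 := by
  obtain ⟨hτ0, hτ2⟩ := hτ
  have hπ : 0 < π := pi_pos
  have hπ4 : π < 3.141593 := pi_lt_d6
  refine ⟨?_, by rw [div_lt_div_iff₀ (by norm_num) (by positivity)]; nlinarith⟩
  -- basic quantities
  have hN0 : (0:ℝ) < 2^T := by positivity
  have hN2 : (2:ℝ) ≤ 2^T := by
    calc (2:ℝ) = 2^1 := (pow_one 2).symm
    _ ≤ 2^T := pow_le_pow_right₀ (by norm_num) hT
  have hNn : (((2^T : ℕ)):ℝ) = (2:ℝ)^T := by push_cast; ring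
  set x : ℝ := (2:ℝ)^T * τ / π with hx
  have hx0 : 0 < x := div_pos (mul_pos hN0 hτ0) hπ
  have hxN2 : x < 2^T/2 := by
    rw [hx, div_lt_div_iff₀ hπ (by norm_num : (0:ℝ) < 2)]
    nlinarith
  set l0 : ℕ := ⌊x⌋₊ with hl0
  have hfl : (l0:ℝ) ≤ x := Nat.floor_le hx0.le
  have hfl1 : x < (l0:ℝ) + 1 := Nat.lt_floor_add_one x
  have hxne : x ≠ (l0:ℝ) := fun hEq => hgrid (l0:ℤ) (by exact_mod_cast hEq)
  set δ : ℝ := x - l0 with hδ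
  have hδ0 : 0 < δ := sub_pos.mpr (hfl.lt_of_ne (Ne.symm hxne))
  have hδ1 : δ < 1 := by rw [hδ]; linarith
  have hτx : τ = π * x / (2:ℝ)^T := by rw [hx]; field_simp
  have hxδ : x = (l0:ℝ) + δ := by rw [hδ]; ring
  set θ1 : ℝ := π * δ / 2^T with hθ1
  set θ2 : ℝ := π * (1-δ) / 2^T with hθ2
  have hθ10 : 0 < θ1 := div_pos (mul_pos hπ hδ0) hN0
  have hθ1π : θ1 < π := by
    rw [hθ1, div_lt_iff₀ hN0]
    nlinarith [mul_lt_mul_of_pos_left hδ1 hπ]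
  have hθ20 : 0 < θ2 := div_pos (mul_pos hπ (by linarith)) hN0
  have hθ2π : θ2 < π := by
    rw [hθ2, div_lt_iff₀ hN0]
    nlinarith [mul_lt_mul_of_pos_left (show (1:ℝ)-δ < 1 by linarith) hπ]
  have hθ1N : θ1 ≤ π / 2^T := by
    rw [hθ1, div_le_div_iff₀ hN0 hN0]
    nlinarith [mul_le_mul_of_nonneg_right (mul_le_mul_of_nonneg_left hδ1.le hπ.le) hN0.le]
  have hθ2N : θ2 ≤ π / 2^T := by
    rw [hθ2, div_le_div_iff₀ hN0 hN0]
    nlinarith [mul_le_mul_of_nonneg_right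
      (mul_le_mul_of_nonneg_left (show (1:ℝ)-δ ≤ 1 by linarith) hπ.le) hN0.le]
  set K : ℝ := Real.sin (π*δ)^2 / (2*((2:ℝ)^T)^2) with hK
  have hK0 : (0:ℝ) ≤ K := by rw [hK]; positivity
  clear_value x l0 δ θ1 θ2 K
  -- target bound
  have hab : 8 / π^2 ≤ 2*(K*(1/θ1^2)) + 2*(K*(1/θ2^2)) := by
    have h8 := key_ineq hδ0 hδ1
    have hexp : 2*(K*(1/θ1^2)) + 2*(K*(1/θ2^2))
        = Real.sin (π*δ)^2 * ((1-δ)^2 + δ^2) / (π^2 * (δ^2 * (1-δ)^2)) := by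
      rw [hK, hθ1, hθ2]
      rw [div_pow, div_pow, mul_pow, mul_pow]
      field_simp [hδ0.ne', hπ.ne', (show (1:ℝ)-δ ≠ 0 by linarith)]
    rw [hexp, div_le_div_iff₀ (by positivity)
      (mul_pos (by positivity) (mul_pos (pow_pos hδ0 2)
        (pow_pos (by linarith : (0:ℝ) < 1-δ) 2)))]
    nlinarith [h8, sq_nonneg π]
  -- the normalisation constant
  have hKk : Real.sin ((2:ℝ)^T * τ)^2 / 2^(2*T+1) = K := by
    have h1 : (2:ℝ)^T * τ = π*δ + ((l0:ℤ):ℝ)*π := by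
      rw [hτx, hxδ]
      push_cast
      field_simp
      ring
    have h2T : (2:ℝ)^(2*T+1) = 2*((2:ℝ)^T)^2 := by
      rw [show 2*T+1 = T+T+1 by ring, pow_add, pow_add, pow_one]; ring
    rw [h1, sin_sq_add_int_mul_pi, h2T, hK]
  -- natural-number bookkeeping
  have hl0n : 2*l0 < 2^T := by
    have h : (2*(l0:ℝ)) < ((2^T : ℕ):ℝ) := by rw [hNn]; linarith
    exact_mod_cast h
  obtain ⟨k, hk⟩ : ∃ k, 2^T = 2*k := ⟨2^(T-1), by
    obtain ⟨t, rfl⟩ : ∃ t, T = t+1 := ⟨T-1, by omega⟩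
    simp [pow_succ, mul_comm]⟩
  have hl1n : 2*(l0+1) ≤ 2^T := by omega
  -- casts
  have hc1 : ((2^T - l0 : ℕ):ℝ) = 2^T - (l0:ℝ) := by
    rw [Nat.cast_sub (by omega), hNn]
  have hc2 : ((2^T - (l0+1) : ℕ):ℝ) = 2^T - ((l0:ℝ)+1) := by
    rw [Nat.cast_sub (by omega), hNn]; push_cast; ring
  -- argument identities
  have hA1 : Real.sin (τ - (l0:ℝ)*π/2^T)^2 = Real.sin θ1^2 := by
    rw [show τ - (l0:ℝ)*π/2^T = θ1 by rw [hθ1, hτx, hxδ]; field_simp; ring]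
  have hA3 : Real.sin (τ - ((l0+1:ℕ):ℝ)*π/2^T)^2 = Real.sin θ2^2 := by
    rw [show τ - ((l0+1:ℕ):ℝ)*π/2^T = -θ2 by
      rw [hθ2, hτx, hxδ]; push_cast; field_simp; ring]
    rw [Real.sin_neg, neg_sq]
  have hA5 : Real.sin (τ + ((2^T - l0 : ℕ):ℝ)*π/2^T)^2 = Real.sin θ1^2 := by
    rw [show τ + ((2^T - l0 : ℕ):ℝ)*π/2^T = θ1 + π by
      rw [hc1, hθ1, hτx, hxδ]; field_simp; ring]
    rw [Real.sin_add_pi, neg_sq]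
  have hA6 : Real.sin (τ + ((2^T - (l0+1) : ℕ):ℝ)*π/2^T)^2 = Real.sin θ2^2 := by
    rw [show τ + ((2^T - (l0+1) : ℕ):ℝ)*π/2^T = π - θ2 by
      rw [hc2, hθ2, hτx, hxδ]; field_simp; ring]
    rw [Real.sin_pi_sub]
  -- conditions
  have hcondgen : ∀ l : ℕ, |π*(l:ℝ)/2^T - τ| ≤ π/2^T →
      |Real.sin (π*(l:ℝ)/2^T)^2 - Real.sin τ^2| ≤ π/2^T :=
    fun l h => le_trans (sin_sq_diff_le _ _) h
  have hcond0 : |Real.sin (π*(l0:ℝ)/2^T)^2 - Real.sin τ^2| ≤ π/2^T := by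
    apply hcondgen
    rw [show π*(l0:ℝ)/2^T - τ = -θ1 by rw [hθ1, hτx, hxδ]; field_simp; ring]
    rw [abs_neg, abs_of_pos hθ10]; exact hθ1N
  have hcond1 : |Real.sin (π*((l0+1:ℕ):ℝ)/2^T)^2 - Real.sin τ^2| ≤ π/2^T := by
    apply hcondgen
    rw [show π*((l0+1:ℕ):ℝ)/2^T - τ = θ2 by
      rw [hθ2, hτx, hxδ]; push_cast; field_simp; ring]
    rw [abs_of_pos hθ20]; exact hθ2N
  have hcondn0 : |Real.sin (π*((2^T - l0 : ℕ):ℝ)/2^T)^2 - Real.sin τ^2| ≤ π/2^T := by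
    have hB : Real.sin (π*((2^T - l0 : ℕ):ℝ)/2^T)^2 = Real.sin (π*(l0:ℝ)/2^T)^2 := by
      rw [show π*((2^T - l0 : ℕ):ℝ)/2^T = π - π*(l0:ℝ)/2^T by
        rw [hc1]; field_simp]
      rw [Real.sin_pi_sub]
    rw [hB]; exact hcond0
  have hcondn1 : |Real.sin (π*((2^T - (l0+1) : ℕ):ℝ)/2^T)^2 - Real.sin τ^2| ≤ π/2^T := by
    have hB : Real.sin (π*((2^T - (l0+1) : ℕ):ℝ)/2^T)^2
        = Real.sin (π*((l0+1:ℕ):ℝ)/2^T)^2 := by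
      rw [show π*((2^T - (l0+1) : ℕ):ℝ)/2^T = π - π*((l0+1:ℕ):ℝ)/2^T by
        rw [hc2]; push_cast; field_simp]
      rw [Real.sin_pi_sub]
    rw [hB]; exact hcond1
  -- per-index pmf bounds
  have hb0 : K * (1/θ1^2) ≤ qaePMF T τ l0 := qae_lb1 T τ l0 K θ1 hKk hK0 hθ10 hθ1π hA1
  have hb1 : K * (1/θ2^2) ≤ qaePMF T τ (l0+1) := by
    apply qae_lb1 T τ (l0+1) K θ2 hKk hK0 hθ20 hθ2π
    exact_mod_cast hA3
  have hbn0 : K * (1/θ1^2) ≤ qaePMF T τ (2^T - l0) := by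
    apply qae_lb1' T τ (2^T - l0) K θ1 hKk hK0 hθ10 hθ1π
    exact hA5
  have hbn1 : K * (1/θ2^2) ≤ qaePMF T τ (2^T - (l0+1)) := by
    apply qae_lb1' T τ (2^T - (l0+1)) K θ2 hKk hK0 hθ20 hθ2π
    exact hA6
    -- nonnegativity of summands
  have hite : ∀ i : ℕ, 0 ≤ (if |Real.sin (π * (i:ℝ) / 2^T)^2 - Real.sin τ^2| ≤ π / 2^T
      then qaePMF T τ i else 0) := by
    intro i
    split
    · exact qaePMF_nonneg T τ i
    · exact le_rfl
  have hn2 : (2:ℕ) ≤ 2^T := by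
    calc (2:ℕ) = 2^1 := rfl
    _ ≤ 2^T := Nat.pow_le_pow_right (by norm_num) hT
  -- make the natural number 2^T opaque
  set n : ℕ := 2^T with hnn
  clear_value n
  have hmono : ∀ s : Finset ℕ, s ⊆ Finset.range n →
      (∑ l ∈ s, if |Real.sin (π * (l:ℝ) / 2^T)^2 - Real.sin τ^2| ≤ π / 2^T
        then qaePMF T τ l else 0)
      ≤ ∑ l ∈ Finset.range n, (if |Real.sin (π * (l:ℝ) / 2^T)^2 - Real.sin τ^2| ≤ π / 2^T
        then qaePMF T τ l else 0) :=
    fun s hs => Finset.sum_le_sum_of_subset_of_nonneg hs (fun i _ _ => hite i)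
  rcases Nat.eq_zero_or_pos l0 with h00 | h01
  · -- l0 = 0 : both terms at l0 coincide
    have hA2 : Real.sin (τ + (l0:ℝ)*π/2^T)^2 = Real.sin θ1^2 := by
      rw [show τ + (l0:ℝ)*π/2^T = θ1 by
        rw [hθ1, hτx, hxδ, h00]; push_cast; field_simp; ring]
    have hb0' : K * (2/θ1^2) ≤ qaePMF T τ l0 :=
      qae_lb2 T τ l0 K θ1 hKk hK0 hθ10 hθ1π hA1 hA2
    rcases eq_or_lt_of_le hl1n with hEqn | hLt
    · -- n = 2(l0+1) : both terms at l0+1 coincide as well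
      have hcast : ((l0:ℝ)+1)*2 = 2^T := by
        have h' : ((2*(l0+1) : ℕ):ℝ) = ((n:ℕ):ℝ) := by rw [hEqn]
        rw [hNn] at h'; push_cast at h'; linarith
      have hA4 : Real.sin (τ + ((l0+1:ℕ):ℝ)*π/2^T)^2 = Real.sin θ2^2 := by
        rw [show τ + ((l0+1:ℕ):ℝ)*π/2^T = π - θ2 by
          rw [hθ2, hτx, hxδ, ← hcast]; push_cast
          field_simp [show ((l0:ℝ)+1)*2 ≠ 0 by positivity]
          ring]
        rw [Real.sin_pi_sub]
      have hb1' : K * (2/θ2^2) ≤ qaePMF T τ (l0+1) :=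
        qae_lb2 T τ (l0+1) K θ2 hKk hK0 hθ20 hθ2π hA3 hA4
      calc 8/π^2 ≤ 2*(K*(1/θ1^2)) + 2*(K*(1/θ2^2)) := hab
        _ ≤ ∑ l ∈ ({l0, l0+1} : Finset ℕ),
              (if |Real.sin (π * (l:ℝ) / 2^T)^2 - Real.sin τ^2| ≤ π / 2^T
                then qaePMF T τ l else 0) := by
            rw [Finset.sum_insert (by simp only [Finset.mem_singleton]; omega),
              Finset.sum_singleton, if_pos hcond0, if_pos hcond1]
            have e1 : K*(2/θ1^2) = 2*(K*(1/θ1^2)) := by ring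
            have e2 : K*(2/θ2^2) = 2*(K*(1/θ2^2)) := by ring
            linarith
        _ ≤ _ := hmono _ (by
            intro i hi
            simp only [Finset.mem_insert, Finset.mem_singleton] at hi
            simp only [Finset.mem_range]
            omega)
    · -- l0 = 0, 2(l0+1) < n
      calc 8/π^2 ≤ 2*(K*(1/θ1^2)) + 2*(K*(1/θ2^2)) := hab
        _ ≤ ∑ l ∈ ({l0, l0+1, n-(l0+1)} : Finset ℕ),
              (if |Real.sin (π * (l:ℝ) / 2^T)^2 - Real.sin τ^2| ≤ π / 2^T
                then qaePMF T τ l else 0) := by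
            rw [Finset.sum_insert (by
                simp only [Finset.mem_insert, Finset.mem_singleton]; omega),
              Finset.sum_insert (by simp only [Finset.mem_singleton]; omega),
              Finset.sum_singleton, if_pos hcond0, if_pos hcond1, if_pos hcondn1]
            have e1 : K*(2/θ1^2) = 2*(K*(1/θ1^2)) := by ring
            linarith [hb1, hbn1]
        _ ≤ _ := hmono _ (by
            intro i hi
            simp only [Finset.mem_insert, Finset.mem_singleton] at hi
            simp only [Finset.mem_range]
            omega)
  · -- 1 ≤ l0
    rcases eq_or_lt_of_le hl1n with hEqn | hLt
    · -- n = 2(l0+1)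
      have hcast : ((l0:ℝ)+1)*2 = 2^T := by
        have h' : ((2*(l0+1) : ℕ):ℝ) = ((n:ℕ):ℝ) := by rw [hEqn]
        rw [hNn] at h'; push_cast at h'; linarith
      have hA4 : Real.sin (τ + ((l0+1:ℕ):ℝ)*π/2^T)^2 = Real.sin θ2^2 := by
        rw [show τ + ((l0+1:ℕ):ℝ)*π/2^T = π - θ2 by
          rw [hθ2, hτx, hxδ, ← hcast]; push_cast
          field_simp [show ((l0:ℝ)+1)*2 ≠ 0 by positivity]
          ring]
        rw [Real.sin_pi_sub]
      have hb1' : K * (2/θ2^2) ≤ qaePMF T τ (l0+1) :=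
        qae_lb2 T τ (l0+1) K θ2 hKk hK0 hθ20 hθ2π hA3 hA4
      calc 8/π^2 ≤ 2*(K*(1/θ1^2)) + 2*(K*(1/θ2^2)) := hab
        _ ≤ ∑ l ∈ ({l0, l0+1, n-l0} : Finset ℕ),
              (if |Real.sin (π * (l:ℝ) / 2^T)^2 - Real.sin τ^2| ≤ π / 2^T
                then qaePMF T τ l else 0) := by
            rw [Finset.sum_insert (by
                simp only [Finset.mem_insert, Finset.mem_singleton]; omega),
              Finset.sum_insert (by simp only [Finset.mem_singleton]; omega),
              Finset.sum_singleton, if_pos hcond0, if_pos hcond1, if_pos hcondn0]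
            have e2 : K*(2/θ2^2) = 2*(K*(1/θ2^2)) := by ring
            linarith [hb0, hbn0]
        _ ≤ _ := hmono _ (by
            intro i hi
            simp only [Finset.mem_insert, Finset.mem_singleton] at hi
            simp only [Finset.mem_range]
            omega)
    · -- generic case : four distinct indices
      calc 8/π^2 ≤ 2*(K*(1/θ1^2)) + 2*(K*(1/θ2^2)) := hab
        _ ≤ ∑ l ∈ ({l0, l0+1, n-(l0+1), n-l0} : Finset ℕ),
              (if |Real.sin (π * (l:ℝ) / 2^T)^2 - Real.sin τ^2| ≤ π / 2^T
                then qaePMF T τ l else 0) := by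
            rw [Finset.sum_insert (by
                simp only [Finset.mem_insert, Finset.mem_singleton]; omega),
              Finset.sum_insert (by
                simp only [Finset.mem_insert, Finset.mem_singleton]; omega),
              Finset.sum_insert (by simp only [Finset.mem_singleton]; omega),
              Finset.sum_singleton, if_pos hcond0, if_pos hcond1, if_pos hcondn1,
              if_pos hcondn0]
            linarith [hb0, hb1, hbn1, hbn0]
        _ ≤ _ := hmono _ (by
            intro i hi
            simp only [Finset.mem_insert, Finset.mem_singleton] at hi
            simp only [Finset.mem_range]
            omega)
end
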